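/- arXiv:1311.0896 — 4 statements merged into one kernel-verified Lean document; each statement's English description precedes it below -/
import Mathlib

section
/- Let K be a field and A = (α_{mn}) an M×N matrix with entries in T. Suppose there is a constant C₂ ≥ 0 such that for all nonnegative integers U₁,…,U_N, V₁,…,V_M, dim V(U₁,…,U_N; V₁,…,V_M) ≤ max(0, U₁+⋯+U_N − V₁−⋯−V_M) + C₂. Then A is strongly badly approximable with constant C₁ = (M+N)² + (M+N)C₂; that is, e^{−(M+N)² − (M+N)C₂} < (∏_{m=1}^M ‖Σ_{n=1}^N α_{mn} ξ_n‖)·(∏_{n=1}^N max(|ξ_n|,1)) for all nonzero ξ ∈ K[x]^N. -/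
/-!
Suppose `ξ ≠ 0` violates the inequality, and write `Lₘ(ξ) = ∑ₙ αₘₙ ξₙ`. With
`Uₙ = deg ξₙ + 1` and `Vₘ` the largest integer such that `‖Lₘ(ξ)‖ < e^{-Vₘ}`, the vector `ξ` lies
in `V(U; V)`. For `s = ⌊C₂⌋` the multiples `Q ξ` with `deg Q ≤ s` form an `(s + 1)`-dimensional
subspace of `V(U + s; V - s)`, so the dimension hypothesis forces `∑ V - ∑ U ≤ (M + N) C₂ - 1`.
If some `Lₘ(ξ)` were a polynomial, `Vₘ` could be taken arbitrarily large, which is absurd;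
otherwise the product in question is exactly `e^{∑ U - N - ∑ V - M} ≥ e^{1 - (M + N) - (M + N) C₂}`,
which exceeds `e^{-(M + N)² - (M + N) C₂}`.
-/

open scoped BigOperators Classical

noncomputable section

variable {K : Type*} [Field K]

/-- `x` as an element of `L = K((x⁻¹))`, realized as the Laurent series in `t = x⁻¹`
supported at the single exponent `-1`. -/
def xL (K : Type*) [Field K] : LaurentSeries K := HahnSeries.single (-1 : ℤ) 1

/-- The embedding of the polynomial ring `K[x]` into `L = K((x⁻¹))`. -/
def toL (P : Polynomial K) : LaurentSeries K := Polynomial.aeval (xL K) P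

/-- The absolute value on `L`: `|0| = 0` and `|F| = e^M` where `M` is the degree in `x`
of the leading term of `F` (i.e. `M = -(order of F as a series in t = x⁻¹)`). -/
def absL (F : LaurentSeries K) : ℝ := if F = 0 then 0 else Real.exp (-(F.order : ℝ))

/-- `‖F‖`, the distance from `F` to the nearest polynomial in `x`. -/
def normL (F : LaurentSeries K) : ℝ :=
  sInf { r : ℝ | ∃ P : Polynomial K, r = absL (F - toL P) }

/-- The solution space `V(U₁,…,U_N; V₁,…,V_M)` of the system
`|ξ_n| < e^{U_n}` and `‖∑_n α_{mn} ξ_n‖ < e^{-V_m}`. -/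
def VSet {M N : ℕ} (A : Matrix (Fin M) (Fin N) (LaurentSeries K))
    (U : Fin N → ℕ) (V : Fin M → ℕ) : Set (Fin N → Polynomial K) :=
  { ξ | (∀ n, absL (toL (ξ n)) < Real.exp (U n)) ∧
        (∀ m, normL (∑ n, A m n * toL (ξ n)) < Real.exp (-(V m : ℝ))) }

/-- `dim V(U₁,…,U_N; V₁,…,V_M)` as a `K`-vector space. -/
def dimV {M N : ℕ} (A : Matrix (Fin M) (Fin N) (LaurentSeries K))
    (U : Fin N → ℕ) (V : Fin M → ℕ) : ℕ :=
  Module.finrank K (Submodule.span K (VSet A U V))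

/-- An `M × N` matrix with entries in `T = L/K[x]` is strongly badly approximable if
there is `C₁ > 0` with `e^{-C₁} < (∏_m ‖∑_n α_{mn} ξ_n‖) (∏_n max(|ξ_n|,1))`
for all nonzero `ξ ∈ K[x]^N`. -/
def StronglyBadlyApproximable {M N : ℕ}
    (A : Matrix (Fin M) (Fin N) (LaurentSeries K)) : Prop :=
  ∃ C₁ : ℝ, 0 < C₁ ∧ ∀ ξ : Fin N → Polynomial K, ξ ≠ 0 →
    Real.exp (-C₁) <
      (∏ m, normL (∑ n, A m n * toL (ξ n))) * (∏ n, max (absL (toL (ξ n))) 1)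

/-- The `V × U` Hankel matrix `M_{U;V}(α)` with `(i,j)` entry `a_{i+j-1}` (1-indexed),
where `a_i` is the coefficient of `x^{-i}` in `α`. -/
def hankel (α : LaurentSeries K) (U V : ℕ) : Matrix (Fin V) (Fin U) K :=
  Matrix.of fun i j => α.coeff ((i : ℤ) + (j : ℤ) + 1)

/-- The block matrix `M_{U₁,…,U_N; V₁,…,V_M}(A)` whose `(m,n)` block is
`M_{U_n; V_m}(α_{mn})`. -/
def blockM {M N : ℕ} (A : Matrix (Fin M) (Fin N) (LaurentSeries K))
    (U : Fin N → ℕ) (V : Fin M → ℕ) :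
    Matrix ((m : Fin M) × Fin (V m)) ((n : Fin N) × Fin (U n)) K :=
  Matrix.of fun i j => hankel (A i.1 j.1) (U j.1) (V i.1) i.2 j.2


open Polynomial

lemma toL_monomial (n : ℕ) (a : K) : toL (monomial n a) = HahnSeries.single (-(n : ℤ)) a := by
  rw [toL, aeval_monomial, xL, HahnSeries.single_pow, HahnSeries.algebraMap_apply']
  simp

lemma coeff_toL (P : K[X]) (k : ℤ) :
    (toL P).coeff k = if k ≤ 0 then P.coeff (-k).toNat else 0 := by
  induction P using Polynomial.induction_on' with
  | add p q hp hq =>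
    rw [toL, map_add, ← toL, ← toL, HahnSeries.coeff_add, hp, hq, coeff_add]
    split_ifs <;> simp
  | monomial n a =>
    rw [toL_monomial, HahnSeries.coeff_single, coeff_monomial]
    split_ifs <;> first | rfl | omega

lemma coeff_toL_neg_natCast (P : K[X]) (n : ℕ) : (toL P).coeff (-(n : ℤ)) = P.coeff n := by
  simp [coeff_toL]

lemma toL_mul (P Q : K[X]) : toL (P * Q) = toL P * toL Q := map_mul _ P Q

lemma toL_sub (P Q : K[X]) : toL (P - Q) = toL P - toL Q := map_sub _ P Q

lemma toL_eq_zero_iff {P : K[X]} : toL P = 0 ↔ P = 0 := by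
  refine ⟨fun h => ext fun n => ?_, fun h => h ▸ map_zero _⟩
  rw [← coeff_toL_neg_natCast, h, HahnSeries.coeff_zero, coeff_zero]

lemma order_toL {P : K[X]} (hP : P ≠ 0) : (toL P).order = -(P.natDegree : ℤ) := by
  refine le_antisymm (HahnSeries.order_le_of_coeff_ne_zero ?_) ?_
  · rwa [coeff_toL_neg_natCast, Ne, ← leadingCoeff, leadingCoeff_eq_zero]
  · have h := mt HahnSeries.coeff_order_eq_zero.mp (toL_eq_zero_iff.not.mpr hP)
    rw [coeff_toL] at h
    split_ifs at h with hle
    · have := le_natDegree_of_ne_zero h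
      omega
    · exact absurd rfl h

lemma absL_toL {P : K[X]} (hP : P ≠ 0) : absL (toL P) = Real.exp P.natDegree := by
  rw [absL, if_neg (toL_eq_zero_iff.not.mpr hP), order_toL hP]
  push_cast
  rw [neg_neg]

lemma absL_toL_le (P : K[X]) : absL (toL P) ≤ Real.exp P.natDegree := by
  by_cases hP : P = 0
  · simp [hP, absL, toL_eq_zero_iff]
  · exact (absL_toL hP).le

lemma absL_toL_lt (P : K[X]) : absL (toL P) < Real.exp (P.natDegree + 1 : ℕ) :=
  (absL_toL_le P).trans_lt (Real.exp_lt_exp.mpr (by simp))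

lemma max_absL_toL_one (P : K[X]) : max (absL (toL P)) 1 = Real.exp P.natDegree := by
  by_cases hP : P = 0
  · simp [hP, absL, toL_eq_zero_iff]
  · rw [absL_toL hP, max_eq_left (Real.one_le_exp (Nat.cast_nonneg _))]

lemma absL_mul (F G : LaurentSeries K) : absL (F * G) = absL F * absL G := by
  by_cases hF : F = 0
  · simp [absL, hF]
  by_cases hG : G = 0
  · simp [absL, hG]
  rw [absL, absL, absL, if_neg hF, if_neg hG, if_neg (mul_ne_zero hF hG),
    HahnSeries.order_mul hF hG, ← Real.exp_add]
  push_cast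
  ring_nf

lemma absL_nonneg (F : LaurentSeries K) : 0 ≤ absL F := by
  unfold absL
  split_ifs
  exacts [le_rfl, Real.exp_nonneg _]

lemma one_le_absL_of_coeff_ne_zero {G : LaurentSeries K} {k : ℤ} (hk : k ≤ 0)
    (h : G.coeff k ≠ 0) : 1 ≤ absL G := by
  have hG : G ≠ 0 := by rintro rfl; exact h rfl
  have : (G.order : ℝ) ≤ 0 := by exact_mod_cast (HahnSeries.order_le_of_coeff_ne_zero h).trans hk
  rw [absL, if_neg hG]
  exact Real.one_le_exp (by linarith)

lemma absL_lt_one_of_coeff_eq_zero {G : LaurentSeries K} (h : ∀ k ≤ 0, G.coeff k = 0) :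
    absL G < 1 := by
  by_cases hG : G = 0
  · simp [absL, hG]
  have : (0 : ℝ) < G.order := by
    by_contra! hle
    exact hG (HahnSeries.coeff_order_eq_zero.mp (h _ (by exact_mod_cast hle)))
  rw [absL, if_neg hG]
  exact Real.exp_lt_one_iff.mpr (by linarith)

lemma exists_absL_sub_toL_lt_one (F : LaurentSeries K) : ∃ P : K[X], absL (F - toL P) < 1 := by
  set D := (-F.order).toNat
  refine ⟨∑ i ∈ Finset.range (D + 1), monomial i (F.coeff (-(i : ℤ))),
    absL_lt_one_of_coeff_eq_zero fun k hk => ?_⟩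
  rw [HahnSeries.coeff_sub, coeff_toL, if_pos hk, finsetSum_coeff]
  simp only [coeff_monomial, Finset.sum_ite_eq', Finset.mem_range]
  split_ifs with hkD
  · rw [show -(((-k).toNat : ℕ) : ℤ) = k by omega, sub_self]
  · rw [sub_zero]
    by_cases hF : F = 0
    · rw [hF, HahnSeries.coeff_zero]
    · exact HahnSeries.coeff_eq_zero_of_lt_order (by omega)

lemma normL_le_absL_sub (F : LaurentSeries K) (P : K[X]) : normL F ≤ absL (F - toL P) :=
  csInf_le ⟨0, by rintro r ⟨Q, rfl⟩; exact absL_nonneg _⟩ ⟨P, rfl⟩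

/-- The nearest polynomial is the one leaving a remainder of absolute value `< 1`: any other
differs from it by a polynomial, whose leading coefficient survives in the remainder. -/
lemma normL_eq_absL_sub {F : LaurentSeries K} {P₀ : K[X]} (h : absL (F - toL P₀) < 1) :
    normL F = absL (F - toL P₀) := by
  refine le_antisymm (normL_le_absL_sub F P₀) (le_csInf ⟨_, P₀, rfl⟩ ?_)
  rintro r ⟨P, rfl⟩
  by_cases hP : P₀ - P = 0
  · rw [sub_eq_zero.mp hP]
  refine h.le.trans (one_le_absL_of_coeff_ne_zero (k := -((P₀ - P).natDegree : ℤ)) (by omega) ?_)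
  have htail : (F - toL P₀).coeff (-((P₀ - P).natDegree : ℤ)) = 0 := by
    by_contra hne
    exact (one_le_absL_of_coeff_ne_zero (by omega) hne).not_gt h
  rw [show F - toL P = (F - toL P₀) + toL (P₀ - P) by rw [toL_sub]; ring, HahnSeries.coeff_add,
    htail, zero_add, coeff_toL_neg_natCast]
  exact mt leadingCoeff_eq_zero.mp hP

lemma normL_nonneg (F : LaurentSeries K) : 0 ≤ normL F :=
  le_csInf ⟨_, 0, rfl⟩ (by rintro r ⟨Q, rfl⟩; exact absL_nonneg _)

lemma normL_lt_one (F : LaurentSeries K) : normL F < 1 := by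
  obtain ⟨P, hP⟩ := exists_absL_sub_toL_lt_one F
  exact normL_eq_absL_sub hP ▸ hP

lemma normL_toL_mul_le (Q : K[X]) (F : LaurentSeries K) :
    normL (toL Q * F) ≤ absL (toL Q) * normL F := by
  obtain ⟨P, hP⟩ := exists_absL_sub_toL_lt_one F
  calc normL (toL Q * F) ≤ absL (toL Q * F - toL (Q * P)) := normL_le_absL_sub _ _
    _ = absL (toL Q) * normL F := by
      rw [toL_mul, ← mul_sub, absL_mul, normL_eq_absL_sub hP]

lemma exists_normL_eq_exp {F : LaurentSeries K} (hF : normL F ≠ 0) :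
    ∃ k : ℕ, normL F = Real.exp (-(k + 1)) := by
  obtain ⟨P, hP⟩ := exists_absL_sub_toL_lt_one F
  rw [normL_eq_absL_sub hP] at hF ⊢
  have hG : F - toL P ≠ 0 := by rintro h; simp [h, absL] at hF
  rw [absL, if_neg hG] at hP ⊢
  have hpos : 0 < (F - toL P).order := by
    have := Real.exp_lt_one_iff.mp hP
    exact_mod_cast (neg_neg_iff_pos.mp this)
  refine ⟨(F - toL P).order.toNat - 1, ?_⟩
  congr 2
  have : ((((F - toL P).order.toNat - 1 : ℕ) : ℤ) : ℝ) + 1 = (F - toL P).order := by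
    norm_cast; omega
  push_cast at this
  linarith

lemma mem_degreeLT_of_absL_toL_lt {P : K[X]} {u : ℕ} (h : absL (toL P) < Real.exp u) :
    P ∈ degreeLT K u := by
  by_cases hP : P = 0
  · exact hP ▸ zero_mem _
  rw [absL_toL hP, Real.exp_lt_exp, Nat.cast_lt] at h
  exact mem_degreeLT.mpr ((natDegree_lt_iff_degree_lt hP).mp h)

section Dimension

variable {M N : ℕ} (A : Matrix (Fin M) (Fin N) (LaurentSeries K)) (U : Fin N → ℕ) (V : Fin M → ℕ)

instance finiteDimensional_span_VSet : FiniteDimensional K (Submodule.span K (VSet A U V)) := by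
  refine Submodule.finiteDimensional_of_le (S₂ := LinearMap.range
    (LinearMap.piMap fun n => (degreeLT K (U n)).subtype)) (Submodule.span_le.mpr ?_)
  rintro ξ ⟨hξ, -⟩
  exact ⟨fun n => ⟨ξ n, mem_degreeLT_of_absL_toL_lt (hξ n)⟩, rfl⟩

lemma le_dimV_of_forall_smul_mem {ξ : Fin N → K[X]} (hξ : ξ ≠ 0) {t : ℕ}
    (h : ∀ Q ∈ degreeLT K t, Q • ξ ∈ VSet A U V) : t ≤ dimV A U V := by
  set f := ((LinearMap.toSpanSingleton K[X] _ ξ).restrictScalars K).domRestrict (degreeLT K t)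
  have hf : Function.Injective f := fun Q R hQR =>
    Subtype.ext (smul_left_injective K[X] hξ hQR)
  calc t = Module.finrank K (degreeLT K t) := by
        simp [Module.finrank_eq_card_basis (degreeLT.basis K t)]
    _ = Module.finrank K (LinearMap.range f) := (LinearMap.finrank_range_of_inj hf).symm
    _ ≤ dimV A U V := Submodule.finrank_mono <| by
      rintro _ ⟨⟨Q, hQ⟩, rfl⟩
      exact Submodule.subset_span (h Q hQ)

end Dimension

section Bound

variable {M N : ℕ} {A : Matrix (Fin M) (Fin N) (LaurentSeries K)} {U : Fin N → ℕ} {V : Fin M → ℕ}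

lemma smul_mem_VSet {ξ : Fin N → K[X]} (hξ : ξ ∈ VSet A U V) {s : ℕ} {Q : K[X]}
    (hQ : Q ∈ degreeLT K (s + 1)) : Q • ξ ∈ VSet A (fun n => U n + s) (fun m => V m - s) := by
  rw [degreeLT_succ_eq_degreeLE, mem_degreeLE, ← natDegree_le_iff_degree_le] at hQ
  have hQs : absL (toL Q) ≤ Real.exp s :=
    (absL_toL_le Q).trans (Real.exp_le_exp.mpr (by exact_mod_cast hQ))
  refine ⟨fun n => ?_, fun m => ?_⟩
  · rw [Pi.smul_apply, smul_eq_mul, toL_mul, absL_mul, Nat.cast_add, add_comm, Real.exp_add]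
    exact mul_lt_mul' hQs (hξ.1 n) (absL_nonneg _) (Real.exp_pos _)
  · have hsum : ∑ n, A m n * toL ((Q • ξ) n) = toL Q * ∑ n, A m n * toL (ξ n) := by
      simp only [Pi.smul_apply, smul_eq_mul, toL_mul, Finset.mul_sum]
      exact Finset.sum_congr rfl fun n _ => by ring
    rw [hsum]
    rcases le_total (V m) s with hVs | hsV
    · simpa [Nat.sub_eq_zero_of_le hVs] using normL_lt_one _
    calc normL (toL Q * _) ≤ absL (toL Q) * normL _ := normL_toL_mul_le _ _
      _ < Real.exp s * Real.exp (-(V m : ℝ)) :=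
        mul_lt_mul' hQs (hξ.2 m) (normL_nonneg _) (Real.exp_pos _)
      _ = Real.exp (-((V m - s : ℕ) : ℝ)) := by
        rw [← Real.exp_add, Nat.cast_sub hsV]; ring_nf

variable {C₂ : ℝ}

lemma sum_sub_sum_le_of_mem_VSet (hC₂ : 0 ≤ C₂)
    (h : ∀ (U : Fin N → ℕ) (V : Fin M → ℕ),
      (dimV A U V : ℝ) ≤ ((max 0 ((∑ n, (U n : ℤ)) - ∑ m, (V m : ℤ)) : ℤ) : ℝ) + C₂)
    {ξ : Fin N → K[X]} (hξ : ξ ∈ VSet A U V) (hξ₀ : ξ ≠ 0) :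
    (∑ m, (V m : ℝ)) - ∑ n, (U n : ℝ) ≤ (M + N) * C₂ - 1 := by
  set s := ⌊C₂⌋₊
  have hs : (s : ℝ) ≤ C₂ := Nat.floor_le hC₂
  have hs' : C₂ < s + 1 := Nat.lt_floor_add_one C₂
  have hN : (1 : ℝ) ≤ N := by
    obtain ⟨n, -⟩ := Function.ne_iff.mp hξ₀
    exact_mod_cast n.pos
  have hdim := (Nat.cast_le (α := ℝ).mpr (le_dimV_of_forall_smul_mem A _ _ hξ₀
    fun Q hQ => smul_mem_VSet (s := s) hξ hQ)).trans (h _ _)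
  have hsum : (∑ n, ((U n + s : ℕ) : ℤ)) - ∑ m, ((V m - s : ℕ) : ℤ) ≤
      (∑ n, (U n : ℤ)) - ∑ m, (V m : ℤ) + (M + N) * s := by
    have : ∑ m, ((V m : ℤ) - s) ≤ ∑ m, ((V m - s : ℕ) : ℤ) :=
      Finset.sum_le_sum fun m _ => by omega
    simp only [Finset.sum_sub_distrib, Nat.cast_add, Finset.sum_add_distrib] at this ⊢
    simp only [Finset.sum_const, Finset.card_univ, Fintype.card_fin, nsmul_eq_mul] at this ⊢
    linarith
  rcases max_cases (0 : ℤ) ((∑ n, ((U n + s : ℕ) : ℤ)) - ∑ m, ((V m - s : ℕ) : ℤ))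
    with ⟨hmax, -⟩ | ⟨hmax, -⟩ <;> rw [hmax, Nat.cast_succ] at hdim
  · push_cast at hdim
    linarith
  · have := hdim.trans (add_le_add_left (Int.cast_le.mpr hsum) C₂)
    push_cast at this
    nlinarith [mul_nonneg (by linarith : (0 : ℝ) ≤ M + N - 1) (sub_nonneg.mpr hs)]

lemma normL_sum_ne_zero_of_forall_dimV_le (hC₂ : 0 ≤ C₂)
    (h : ∀ (U : Fin N → ℕ) (V : Fin M → ℕ),
      (dimV A U V : ℝ) ≤ ((max 0 ((∑ n, (U n : ℤ)) - ∑ m, (V m : ℤ)) : ℤ) : ℝ) + C₂)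
    {ξ : Fin N → K[X]} (hξ₀ : ξ ≠ 0) (m₀ : Fin M) :
    normL (∑ n, A m₀ n * toL (ξ n)) ≠ 0 := by
  intro hzero
  set U : Fin N → ℕ := fun n => (ξ n).natDegree + 1
  set B := ⌈(M + N) * C₂⌉₊ + ∑ n, U n
  have hξ : ξ ∈ VSet A U (Pi.single m₀ B) := by
    refine ⟨fun n => absL_toL_lt _, fun m => ?_⟩
    rcases eq_or_ne m m₀ with rfl | hm
    · exact hzero ▸ Real.exp_pos _
    · simpa [hm] using normL_lt_one _
  have := sum_sub_sum_le_of_mem_VSet hC₂ h hξ hξ₀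
  rw [← Nat.cast_sum, Finset.sum_pi_single', if_pos (Finset.mem_univ _)] at this
  push_cast [B] at this
  linarith [Nat.le_ceil ((M + N) * C₂)]

end Bound

/-- if there is `C₂ ≥ 0` with
`dim V(U₁,…,U_N; V₁,…,V_M) ≤ max(0, U₁+⋯+U_N − V₁−⋯−V_M) + C₂` for all nonnegative
integers `U`, `V`, then `A` is strongly badly approximable with constant
`C₁ = (M+N)² + (M+N)C₂`. -/
theorem sba_of_dimV_le {K : Type*} [Field K] {M N : ℕ}
    (A : Matrix (Fin M) (Fin N) (LaurentSeries K)) (C₂ : ℝ) (hC₂ : 0 ≤ C₂)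
    (h : ∀ (U : Fin N → ℕ) (V : Fin M → ℕ),
      (dimV A U V : ℝ) ≤
        ((max 0 ((∑ n, (U n : ℤ)) - ∑ m, (V m : ℤ)) : ℤ) : ℝ) + C₂) :
    ∀ ξ : Fin N → Polynomial K, ξ ≠ 0 →
      Real.exp (-(((M : ℝ) + N) ^ 2 + ((M : ℝ) + N) * C₂)) <
        (∏ m, normL (∑ n, A m n * toL (ξ n))) * (∏ n, max (absL (toL (ξ n))) 1) := by
  intro ξ hξ₀
  by_contra! hle
  choose k hk using fun m => exists_normL_eq_exp
    (normL_sum_ne_zero_of_forall_dimV_le hC₂ h hξ₀ m)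
  have hξ : ξ ∈ VSet A (fun n => (ξ n).natDegree + 1) k :=
    ⟨fun n => absL_toL_lt _, fun m => hk m ▸ Real.exp_lt_exp.mpr (by linarith)⟩
  have hbound := sum_sub_sum_le_of_mem_VSet hC₂ h hξ hξ₀
  simp only [hk, max_absL_toL_one, ← Real.exp_sum, ← Real.exp_add, Real.exp_le_exp] at hle
  push_cast at hbound hle
  simp only [Finset.sum_add_distrib, Finset.sum_neg_distrib, Finset.sum_const, Finset.card_univ,
    Fintype.card_fin, nsmul_eq_mul, mul_one] at hbound hle
  nlinarith [sq_nonneg ((M : ℝ) + N - 1)]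
end
end

section
/- Let K be an infinite field and let M, N be nonnegative integers. Then there exists an M×N matrix A = (α_{mn}) with entries in T such that for all nonnegative integers U₁,…,U_N, V₁,…,V_M with U₁+⋯+U_N = V₁+⋯+V_M, the square matrix M_{U₁,…,U_N;V₁,…,V_M}(A) is nonsingular. -/
open scoped BigOperators Classical

noncomputable section

variable {K : Type*} [Field K]

namespace Stmt11

open Matrix Finset Function Equiv

variable {K : Type*} [Field K]

/-! ### Time encoding of Hankel coefficient variables -/

/-- The "time" at which coefficient `t` of entry `p` of the matrix is chosen. -/
def tme {M N : ℕ} (p : Fin M × Fin N) (t : ℕ) : ℕ := t * (M * N) + (finProdFinEquiv p : ℕ)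

lemma tme_mono {M N : ℕ} {p : Fin M × Fin N} {t t' : ℕ} (h : t ≤ t') : tme p t ≤ tme p t' := by
  unfold tme
  have := Nat.mul_le_mul_right (M * N) h
  omega

lemma tme_lt {M N : ℕ} {p q : Fin M × Fin N} {t t' : ℕ} (h : t < t') : tme p t < tme q t' := by
  unfold tme
  have h1 : (finProdFinEquiv p : ℕ) < M * N := (finProdFinEquiv p).isLt
  have h2 : t * (M * N) + (M * N) = (t + 1) * (M * N) := by ring
  have h3 : (t + 1) * (M * N) ≤ t' * (M * N) := Nat.mul_le_mul_right _ h
  omega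

lemma tme_inj {M N : ℕ} {p q : Fin M × Fin N} {t t' : ℕ} (h : tme p t = tme q t') :
    p = q ∧ t = t' := by
  have ht : t = t' := by
    rcases Nat.lt_trichotomy t t' with hlt | heq | hgt
    · exact absurd h (Nat.ne_of_lt (tme_lt hlt))
    · exact heq
    · exact absurd h.symm (Nat.ne_of_lt (tme_lt hgt))
  subst ht
  have hv : (finProdFinEquiv p : ℕ) = (finProdFinEquiv q : ℕ) := by
    unfold tme at h; omega
  exact ⟨finProdFinEquiv.injective (Fin.ext hv), rfl⟩

lemma self_le_tme {M N : ℕ} (p : Fin M × Fin N) (t : ℕ) : t ≤ tme p t := by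
  have hM : 0 < M := p.1.pos
  have hN : 0 < N := p.2.pos
  have : t * 1 ≤ t * (M * N) := Nat.mul_le_mul_left t (Nat.mul_pos hM hN)
  unfold tme; omega

/-! ### The block matrix determined by a coefficient choice `c : ℕ → K` -/

/-- The block Hankel matrix whose `(m,n)` block has Hankel coefficients
`a_t = c (tme (m,n) t)`. -/
def BmatOf {M N : ℕ} (c : ℕ → K) (U : Fin N → ℕ) (V : Fin M → ℕ) :
    Matrix ((m : Fin M) × Fin (V m)) ((n : Fin N) × Fin (U n)) K :=
  Matrix.of fun p q => c (tme (p.1, q.1) ((p.2 : ℕ) + (q.2 : ℕ) + 1))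

/-- The corners: pairs of blocks that are nonempty. -/
def corners {M N : ℕ} (U : Fin N → ℕ) (V : Fin M → ℕ) : Finset (Fin M × Fin N) :=
  Finset.univ.filter fun p => 0 < U p.2 ∧ 0 < V p.1

/-- The time at which the matrix `BmatOf c U V` is fully determined. -/
def TT {M N : ℕ} (U : Fin N → ℕ) (V : Fin M → ℕ) : ℕ :=
  (corners U V).sup fun p => tme p (U p.2 + V p.1 - 1)

lemma entry_tme_le {M N : ℕ} (U : Fin N → ℕ) (V : Fin M → ℕ)
    (p : (m : Fin M) × Fin (V m)) (q : (n : Fin N) × Fin (U n)) :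
    tme (p.1, q.1) ((p.2 : ℕ) + (q.2 : ℕ) + 1) ≤ TT U V := by
  have h1 : (p.2 : ℕ) < V p.1 := p.2.isLt
  have h2 : (q.2 : ℕ) < U q.1 := q.2.isLt
  have hmem : (p.1, q.1) ∈ corners U V := by
    simp only [corners, Finset.mem_filter, Finset.mem_univ, true_and]
    exact ⟨by omega, by omega⟩
  calc tme (p.1, q.1) ((p.2 : ℕ) + (q.2 : ℕ) + 1)
      ≤ tme (p.1, q.1) (U q.1 + V p.1 - 1) := tme_mono (by omega)
    _ ≤ TT U V := by
        unfold TT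
        exact Finset.le_sup (f := fun p : Fin M × Fin N => tme p (U p.2 + V p.1 - 1)) hmem

/-! ### Nonsingularity -/

/-- Nonsingularity of a rectangular matrix: all squarifications have nonzero determinant. -/
def NSmat {ρ γ : Type*} (B : Matrix ρ γ K) : Prop :=
  ∀ (s : ℕ) (f : Fin s ≃ ρ) (g : Fin s ≃ γ), (B.submatrix f g).det ≠ 0

lemma det_perm_ne_zero_iff {s : ℕ} (Y : Matrix (Fin s) (Fin s) K) (σ τ : Equiv.Perm (Fin s)) :
    (Y.submatrix σ τ).det ≠ 0 ↔ Y.det ≠ 0 := by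
  have h1 : Y.submatrix ⇑σ ⇑τ = (Y.submatrix id ⇑τ).submatrix ⇑σ id := rfl
  rw [h1, Matrix.det_permute, Matrix.det_permute']
  rcases Int.units_eq_one_or (Equiv.Perm.sign σ) with h | h <;>
    rcases Int.units_eq_one_or (Equiv.Perm.sign τ) with h' | h' <;>
      simp [h, h']

lemma det_transfer {ρ γ : Type*} (B : Matrix ρ γ K) {s s' : ℕ}
    (f : Fin s ≃ ρ) (g : Fin s ≃ γ) (f' : Fin s' ≃ ρ) (g' : Fin s' ≃ γ)
    (h : (B.submatrix f g).det ≠ 0) : (B.submatrix f' g').det ≠ 0 := by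
  have hs : s = s' := Fin.equiv_iff_eq.mp ⟨f.trans f'.symm⟩
  subst hs
  have hEq : B.submatrix ⇑f' ⇑g' = (B.submatrix ⇑f ⇑g).submatrix ⇑(f'.trans f.symm) ⇑(g'.trans g.symm) := by
    ext i j
    simp [Matrix.submatrix_apply]
  rw [hEq]
  exact (det_perm_ne_zero_iff _ _ _).mpr h

lemma NSmat_of_sum_zero {M N : ℕ} (U : Fin N → ℕ) (V : Fin M → ℕ)
    (h : (∑ n, U n) = 0) (B : Matrix ((m : Fin M) × Fin (V m)) ((n : Fin N) × Fin (U n)) K) :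
    NSmat B := by
  intro s f g
  haveI : IsEmpty ((n : Fin N) × Fin (U n)) := by
    constructor
    rintro ⟨n, i⟩
    have hn : U n = 0 := by
      have := Finset.sum_eq_zero_iff.mp h n (Finset.mem_univ n)
      exact this
    exact absurd i.isLt (by omega)
  haveI : IsEmpty (Fin s) := g.isEmpty
  rw [Matrix.det_isEmpty]
  exact one_ne_zero

/-- The key determinant identity: if row `r0` of `P` is the unit vector `e_{s0}`, then
replacing column `s0` by the unit vector `e_{r0}` does not change the determinant. -/
lemma det_updateCol_of_row_single {s : ℕ} (P : Matrix (Fin s) (Fin s) K) (r0 s0 : Fin s)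
    (h : P r0 = Pi.single s0 1) :
    (P.updateCol s0 (Pi.single r0 1)).det = P.det := by
  rw [Matrix.det_apply, Matrix.det_apply]
  refine Finset.sum_congr rfl fun σ _ => ?_
  congr 1
  by_cases hσ : σ s0 = r0
  · refine Finset.prod_congr rfl fun i _ => ?_
    by_cases hi : i = s0
    · subst hi
      rw [Matrix.updateCol_self, hσ, h, Pi.single_eq_same, Pi.single_eq_same]
    · rw [Matrix.updateCol_ne hi]
  · have h1 : ∏ i, (P.updateCol s0 (Pi.single r0 1)) (σ i) i = 0 := by
      apply Finset.prod_eq_zero (Finset.mem_univ s0)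
      rw [Matrix.updateCol_self]
      exact Pi.single_eq_of_ne hσ 1
    have h2 : ∏ i, P (σ i) i = 0 := by
      apply Finset.prod_eq_zero (Finset.mem_univ (σ.symm r0))
      have hne : σ.symm r0 ≠ s0 := by
        intro hc
        apply hσ
        rw [← hc, Equiv.apply_symm_apply]
      rw [Equiv.apply_symm_apply, h]
      exact Pi.single_eq_of_ne hne 1
    rw [h1, h2]

/-! ### The extension equivalence -/

/-- Embedding of the shrunken sigma type into the original one. -/
def embd {M : ℕ} {V V' : Fin M → ℕ} (h : ∀ a, V' a ≤ V a) (p : (m : Fin M) × Fin (V' m)) :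
    (m : Fin M) × Fin (V m) :=
  ⟨p.1, ⟨(p.2 : ℕ), lt_of_lt_of_le p.2.isLt (h p.1)⟩⟩

lemma update_le {M : ℕ} (V : Fin M → ℕ) (m₀ : Fin M) :
    ∀ a, Function.update V m₀ (V m₀ - 1) a ≤ V a := by
  intro a
  by_cases h : a = m₀
  · subst h; rw [Function.update_self]; omega
  · rw [Function.update_of_ne h]

/-- The equivalence realizing `RT V` as `RT V' ⊕ pt`, where `V'` decreases `V` at `m₀`. -/
noncomputable def extEquiv {M : ℕ} (V : Fin M → ℕ) (m₀ : Fin M) (h : 0 < V m₀) :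
    ((m : Fin M) × Fin (Function.update V m₀ (V m₀ - 1) m)) ⊕ Fin 1 ≃ ((m : Fin M) × Fin (V m)) := by
  refine Equiv.ofBijective
    (Sum.elim (embd (update_le V m₀)) (fun _ => ⟨m₀, ⟨V m₀ - 1, by omega⟩⟩)) ⟨?_, ?_⟩
  · rintro (⟨m1, i1⟩ | z1) (⟨m2, i2⟩ | z2) hxy
    · simp only [Sum.elim_inl, embd] at hxy
      have h1 : m1 = m2 := congrArg Sigma.fst hxy
      subst h1
      have h2 : (i1 : ℕ) = (i2 : ℕ) :=
        congrArg (fun z : (m : Fin M) × Fin (V m) => (z.2 : ℕ)) hxy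
      have h5 : i1 = i2 := Fin.ext h2
      rw [h5]
    · exfalso
      simp only [Sum.elim_inl, Sum.elim_inr, embd] at hxy
      have h1 : m1 = m₀ := congrArg Sigma.fst hxy
      have h2 : (i1 : ℕ) = V m₀ - 1 :=
        congrArg (fun z : (m : Fin M) × Fin (V m) => (z.2 : ℕ)) hxy
      have h3 := i1.isLt
      have h4 : Function.update V m₀ (V m₀ - 1) m1 = V m₀ - 1 := by
        rw [h1, Function.update_self]
      omega
    · exfalso
      simp only [Sum.elim_inl, Sum.elim_inr, embd] at hxy
      have h1 : m₀ = m2 := congrArg Sigma.fst hxy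
      have h2 : V m₀ - 1 = (i2 : ℕ) :=
        congrArg (fun z : (m : Fin M) × Fin (V m) => (z.2 : ℕ)) hxy
      have h3 := i2.isLt
      have h4 : Function.update V m₀ (V m₀ - 1) m2 = V m₀ - 1 := by
        rw [← h1, Function.update_self]
      omega
    · rw [Subsingleton.elim z1 z2]
  · rintro ⟨m, i⟩
    by_cases hm : m = m₀
    · subst hm
      by_cases hi : (i : ℕ) = V m - 1
      · refine ⟨Sum.inr 0, ?_⟩
        simp only [Sum.elim_inr]
        congr 1
        exact Fin.ext hi.symm
      · have hlt : (i : ℕ) < Function.update V m (V m - 1) m := by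
          rw [Function.update_self]
          have := i.isLt
          omega
        exact ⟨Sum.inl ⟨m, ⟨(i : ℕ), hlt⟩⟩, by simp only [Sum.elim_inl, embd]⟩
    · have hlt : (i : ℕ) < Function.update V m₀ (V m₀ - 1) m := by
        rw [Function.update_of_ne hm]
        exact i.isLt
      exact ⟨Sum.inl ⟨m, ⟨(i : ℕ), hlt⟩⟩, by simp only [Sum.elim_inl, embd]⟩

@[simp] lemma extEquiv_inl {M : ℕ} (V : Fin M → ℕ) (m₀ : Fin M) (h : 0 < V m₀)
    (p : (m : Fin M) × Fin (Function.update V m₀ (V m₀ - 1) m)) :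
    extEquiv V m₀ h (Sum.inl p) = embd (update_le V m₀) p := rfl

@[simp] lemma extEquiv_inr {M : ℕ} (V : Fin M → ℕ) (m₀ : Fin M) (h : 0 < V m₀) (z : Fin 1) :
    extEquiv V m₀ h (Sum.inr z) = ⟨m₀, ⟨V m₀ - 1, by omega⟩⟩ := rfl

end Stmt11

namespace Stmt11

open Matrix Finset Function Equiv

variable {K : Type*} [Field K]

lemma sigma_fin_ext {M : ℕ} {V : Fin M → ℕ} {p q : (m : Fin M) × Fin (V m)}
    (h1 : p.1 = q.1) (h2 : (p.2 : ℕ) = (q.2 : ℕ)) : p = q := by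
  rcases p with ⟨a, b⟩
  rcases q with ⟨a', b'⟩
  simp only at h1 h2
  subst h1
  have h3 : b = b' := Fin.ext h2
  rw [h3]

/-- `Good c τ`: all block Hankel matrices determined by time `τ` are nonsingular. -/
def Good (M N : ℕ) (c : ℕ → K) (τ : ℕ) : Prop :=
  ∀ (U : Fin N → ℕ) (V : Fin M → ℕ), (∑ n, U n) = (∑ m, V m) → TT U V ≤ τ →
    NSmat (BmatOf c U V)

lemma good_zero (M N : ℕ) (c : ℕ → K) : Good M N c 0 := by
  intro U V hsum hT
  rcases Nat.eq_zero_or_pos (∑ n, U n) with h | h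
  · exact NSmat_of_sum_zero U V h _
  · exfalso
    obtain ⟨n, -, hn⟩ := Finset.exists_ne_zero_of_sum_ne_zero (by omega :
      (∑ n, U n) ≠ 0)
    obtain ⟨m, -, hm⟩ := Finset.exists_ne_zero_of_sum_ne_zero (by omega :
      (∑ m, V m) ≠ 0)
    have hmem : (m, n) ∈ corners U V := by
      simp only [corners, Finset.mem_filter, Finset.mem_univ, true_and]
      exact ⟨by omega, by omega⟩
    have h1 : tme (m, n) (U n + V m - 1) ≤ TT U V := by
      unfold TT
      exact Finset.le_sup (f := fun p : Fin M × Fin N => tme p (U p.2 + V p.1 - 1)) hmem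
    have h2 : 1 ≤ U n + V m - 1 := by omega
    have h3 : (1 : ℕ) ≤ tme (m, n) (U n + V m - 1) :=
      le_trans h2 (self_le_tme _ _)
    omega

lemma sum_update_sub_one {N : ℕ} (U : Fin N → ℕ) (n₀ : Fin N) (h : 0 < U n₀) :
    (∑ n, Function.update U n₀ (U n₀ - 1) n) + 1 = ∑ n, U n := by
  rw [Finset.sum_update_of_mem (Finset.mem_univ n₀)]
  have h2 : U n₀ + ∑ n ∈ Finset.univ.erase n₀, U n = ∑ n, U n :=
    Finset.add_sum_erase _ _ (Finset.mem_univ n₀)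
  have h3 : (Finset.univ : Finset (Fin N)) \ {n₀} = Finset.univ.erase n₀ := by
    rw [Finset.sdiff_singleton_eq_erase]
  rw [h3]
  omega

/-- The key step: each newly-determined constraint is an affine nonconstant function of the
newly chosen coefficient. -/
lemma exists_affine {M N : ℕ} (c : ℕ → K) (τ : ℕ) (hG : Good M N c τ)
    (U : Fin N → ℕ) (V : Fin M → ℕ) (hsum : (∑ n, U n) = (∑ m, V m))
    (hT : TT U V = τ + 1) :
    ∃ (s : ℕ) (f : Fin s ≃ (m : Fin M) × Fin (V m)) (g : Fin s ≃ (n : Fin N) × Fin (U n))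
      (e₀ d : K), d ≠ 0 ∧
      ∀ v : K, ((BmatOf (Function.update c (τ + 1) v) U V).submatrix f g).det = e₀ + v * d := by
  classical
  -- the maximal corner
  have hne : (corners U V).Nonempty := by
    rw [Finset.nonempty_iff_ne_empty]
    intro hc
    unfold TT at hT
    rw [hc, Finset.sup_empty] at hT
    exact absurd hT (by simp)
  obtain ⟨p₀, hp₀mem, hp₀⟩ :=
    Finset.exists_mem_eq_sup (corners U V) hne (fun p : Fin M × Fin N => tme p (U p.2 + V p.1 - 1))
  obtain ⟨m₀, n₀⟩ := p₀
  simp only [corners, Finset.mem_filter, Finset.mem_univ, true_and] at hp₀mem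
  dsimp only at hp₀mem hp₀
  obtain ⟨hU0, hV0⟩ := hp₀mem
  have htau : τ + 1 = tme (m₀, n₀) (U n₀ + V m₀ - 1) := by rw [← hT]; exact hp₀
  -- characterization of the corner entry
  have hchar : ∀ (p : (m : Fin M) × Fin (V m)) (q : (n : Fin N) × Fin (U n)),
      tme (p.1, q.1) ((p.2 : ℕ) + (q.2 : ℕ) + 1) = τ + 1 ↔
      (p.1 = m₀ ∧ q.1 = n₀ ∧ (p.2 : ℕ) = V m₀ - 1 ∧ (q.2 : ℕ) = U n₀ - 1) := by
    intro p q
    constructor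
    · intro hpq
      obtain ⟨hpq1, hpq2⟩ := tme_inj (hpq.trans htau)
      rw [Prod.mk.injEq] at hpq1
      obtain ⟨e1, e2⟩ := hpq1
      have b1 : (p.2 : ℕ) < V p.1 := p.2.isLt
      have b2 : (q.2 : ℕ) < U q.1 := q.2.isLt
      have b1' : V p.1 = V m₀ := by rw [e1]
      have b2' : U q.1 = U n₀ := by rw [e2]
      exact ⟨e1, e2, by omega, by omega⟩
    · rintro ⟨e1, e2, e3, e4⟩
      have hppair : (p.1, q.1) = (m₀, n₀) := by
        rw [Prod.mk.injEq]
        exact ⟨e1, e2⟩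
      rw [hppair, e3, e4]
      have harg : V m₀ - 1 + (U n₀ - 1) + 1 = U n₀ + V m₀ - 1 := by omega
      rw [harg, ← htau]
  -- shrunken parameters
  set U' := Function.update U n₀ (U n₀ - 1) with hU'
  set V' := Function.update V m₀ (V m₀ - 1) with hV'
  have hsU : (∑ n, U' n) + 1 = ∑ n, U n := sum_update_sub_one U n₀ hU0
  have hsV : (∑ m, V' m) + 1 = ∑ m, V m := sum_update_sub_one V m₀ hV0
  have hsum' : (∑ n, U' n) = ∑ m, V' m := by omega
  -- T (U', V') ≤ τ
  have hT' : TT U' V' ≤ τ := by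
    have hlt : TT U' V' < τ + 1 := by
      unfold TT
      rw [Finset.sup_lt_iff (show (⊥ : ℕ) < τ + 1 from Nat.succ_pos τ)]
      intro p hp
      simp only [corners, Finset.mem_filter, Finset.mem_univ, true_and] at hp
      obtain ⟨hp1, hp2⟩ := hp
      have hle1 : U' p.2 ≤ U p.2 := update_le U n₀ p.2
      have hle2 : V' p.1 ≤ V p.1 := update_le V m₀ p.1
      have hmem : p ∈ corners U V := by
        simp only [corners, Finset.mem_filter, Finset.mem_univ, true_and]
        exact ⟨by omega, by omega⟩
      have h1 : tme p (U' p.2 + V' p.1 - 1) ≤ tme p (U p.2 + V p.1 - 1) :=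
        tme_mono (by omega)
      have h2 : tme p (U p.2 + V p.1 - 1) ≤ τ + 1 := by
        rw [← hT]
        unfold TT
        exact Finset.le_sup (f := fun p : Fin M × Fin N => tme p (U p.2 + V p.1 - 1)) hmem
      rcases Nat.lt_or_ge (tme p (U' p.2 + V' p.1 - 1)) (τ + 1) with h | h
      · exact h
      · exfalso
        have heq : tme p (U' p.2 + V' p.1 - 1) = τ + 1 := by omega
        obtain ⟨hpp, htt⟩ := tme_inj (heq.trans htau)
        have hfst : p.1 = m₀ := congrArg Prod.fst hpp
        have hsnd : p.2 = n₀ := congrArg Prod.snd hpp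
        have e1 : U' p.2 = U n₀ - 1 := by
          rw [hsnd, hU', Function.update_self]
        have e2 : V' p.1 = V m₀ - 1 := by
          rw [hfst, hV', Function.update_self]
        have e3 : U p.2 = U n₀ := by rw [hsnd]
        have e4 : V p.1 = V m₀ := by rw [hfst]
        omega
    omega
  -- sizes and equivalences
  set s' := ∑ n, U' n with hs'
  have hcV' : Fintype.card ((m : Fin M) × Fin (V' m)) = s' := by
    have hcc : Fintype.card ((m : Fin M) × Fin (V' m)) = ∑ m, V' m := by
      simp [Fintype.card_sigma]
    omega
  have hcU' : Fintype.card ((n : Fin N) × Fin (U' n)) = s' := by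
    have hcc : Fintype.card ((n : Fin N) × Fin (U' n)) = ∑ n, U' n := by
      simp [Fintype.card_sigma]
    omega
  set f' := (Fintype.equivFinOfCardEq hcV').symm with hf'
  set g' := (Fintype.equivFinOfCardEq hcU').symm with hg'
  set eV := extEquiv V m₀ hV0 with heV
  set eU := extEquiv U n₀ hU0 with heU
  set f : Fin (s' + 1) ≃ (m : Fin M) × Fin (V m) :=
    finSumFinEquiv.symm.trans ((f'.sumCongr (Equiv.refl (Fin 1))).trans eV) with hf
  set g : Fin (s' + 1) ≃ (n : Fin N) × Fin (U n) :=
    finSumFinEquiv.symm.trans ((g'.sumCongr (Equiv.refl (Fin 1))).trans eU) with hg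
  set r : (m : Fin M) × Fin (V m) := ⟨m₀, ⟨V m₀ - 1, by omega⟩⟩ with hr
  set s₀ : (n : Fin N) × Fin (U n) := ⟨n₀, ⟨U n₀ - 1, by omega⟩⟩ with hs₀
  set rI := f.symm r with hrI
  set sI := g.symm s₀ with hsI
  -- the matrix as a function of the new coefficient
  set Y : K → Matrix (Fin (s' + 1)) (Fin (s' + 1)) K :=
    fun v => (BmatOf (Function.update c (τ + 1) v) U V).submatrix f g with hY
  have hYentry : ∀ (v : K) (i j : Fin (s' + 1)), Y v i j =
      Function.update c (τ + 1) v
        (tme ((f i).1, (g j).1) (((f i).2 : ℕ) + ((g j).2 : ℕ) + 1)) := by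
    intro v i j
    simp only [hY, BmatOf, Matrix.submatrix_apply, Matrix.of_apply]
  -- corner characterization in squarified coordinates
  have hcorner : ∀ (i j : Fin (s' + 1)), (i = rI ∧ j = sI) ↔
      tme ((f i).1, (g j).1) (((f i).2 : ℕ) + ((g j).2 : ℕ) + 1) = τ + 1 := by
    intro i j
    rw [hchar]
    constructor
    · rintro ⟨hi, hj⟩
      have h1 : f i = r := by rw [hi, hrI, Equiv.apply_symm_apply]
      have h2 : g j = s₀ := by rw [hj, hsI, Equiv.apply_symm_apply]
      rw [h1, h2]
      exact ⟨rfl, rfl, rfl, rfl⟩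
    · rintro ⟨e1, e2, e3, e4⟩
      have h1 : f i = r := sigma_fin_ext e1 (e3.trans rfl)
      have h2 : g j = s₀ := sigma_fin_ext e2 (e4.trans rfl)
      constructor
      · rw [hrI, ← h1, Equiv.symm_apply_apply]
      · rw [hsI, ← h2, Equiv.symm_apply_apply]
  -- entries other than the corner do not depend on v
  have hsame : ∀ (v w : K) (i j : Fin (s' + 1)), ¬(i = rI ∧ j = sI) →
      Y v i j = Y w i j := by
    intro v w i j hij
    have hne2 : tme ((f i).1, (g j).1) (((f i).2 : ℕ) + ((g j).2 : ℕ) + 1) ≠ τ + 1 := by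
      intro hc
      exact hij ((hcorner i j).mpr hc)
    rw [hYentry, hYentry, Function.update_of_ne hne2, Function.update_of_ne hne2]
  have hYcorner : ∀ v : K, Y v rI sI = v := by
    intro v
    have hc : tme ((f rI).1, (g sI).1) (((f rI).2 : ℕ) + ((g sI).2 : ℕ) + 1) = τ + 1 :=
      (hcorner rI sI).mp ⟨rfl, rfl⟩
    rw [hYentry, hc, Function.update_self]
  -- the affine decomposition
  have hupdate : ∀ v : K, Y v = (Y 0).updateRow rI (Function.update ((Y 0) rI) sI v) := by
    intro v
    ext i j
    rw [Matrix.updateRow_apply]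
    by_cases hi : i = rI
    · rw [if_pos hi, Function.update_apply]
      by_cases hj : j = sI
      · rw [if_pos hj, hi, hj]
        exact hYcorner v
      · rw [if_neg hj]
        have h5 := hsame v 0 i j (fun hc => hj hc.2)
        rw [h5, hi]
    · rw [if_neg hi]
      exact hsame v 0 i j (fun hc => hi hc.1)
  set e₀ : K := ((Y 0).updateRow rI (Function.update ((Y 0) rI) sI 0)).det with he₀
  set d : K := ((Y 0).updateRow rI (Pi.single sI 1)).det with hd
  have haff : ∀ v : K, (Y v).det = e₀ + v * d := by
    intro v
    rw [hupdate v]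
    have hrow : Function.update ((Y 0) rI) sI v =
        Function.update ((Y 0) rI) sI 0 + v • (Pi.single sI 1 : Fin (s' + 1) → K) := by
      funext j
      by_cases hj : j = sI
      · subst hj
        simp
      · simp [Function.update_of_ne hj, Pi.single_eq_of_ne hj]
    rw [hrow, Matrix.det_updateRow_add, Matrix.det_updateRow_smul, he₀, hd]
  -- now show d ≠ 0
  have hfinl : ∀ x : Fin s', f (finSumFinEquiv (Sum.inl x)) = embd (update_le V m₀) (f' x) := by
    intro x
    rw [hf]
    simp only [Equiv.trans_apply, Equiv.symm_apply_apply, Equiv.sumCongr_apply, Sum.map_inl]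
    rw [heV, extEquiv_inl]
  have hfinr : ∀ z : Fin 1, f (finSumFinEquiv (Sum.inr z)) = r := by
    intro z
    rw [hf]
    simp only [Equiv.trans_apply, Equiv.symm_apply_apply, Equiv.sumCongr_apply, Sum.map_inr]
    rw [heV, extEquiv_inr, hr]
  have hginl : ∀ y : Fin s', g (finSumFinEquiv (Sum.inl y)) = embd (update_le U n₀) (g' y) := by
    intro y
    rw [hg]
    simp only [Equiv.trans_apply, Equiv.symm_apply_apply, Equiv.sumCongr_apply, Sum.map_inl]
    rw [heU, extEquiv_inl]
  have hginr : ∀ z : Fin 1, g (finSumFinEquiv (Sum.inr z)) = s₀ := by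
    intro z
    rw [hg]
    simp only [Equiv.trans_apply, Equiv.symm_apply_apply, Equiv.sumCongr_apply, Sum.map_inr]
    rw [heU, extEquiv_inr, hs₀]
  have hembdV_ne : ∀ p, embd (update_le V m₀) p ≠ r := by
    intro p hc
    have h1 : p.1 = m₀ := congrArg Sigma.fst hc
    have h2 : (p.2 : ℕ) = V m₀ - 1 :=
      congrArg (fun z : (m : Fin M) × Fin (V m) => (z.2 : ℕ)) hc
    have h3 := p.2.isLt
    have h4 : Function.update V m₀ (V m₀ - 1) p.1 = V m₀ - 1 := by
      rw [h1, Function.update_self]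
    omega
  have hembdU_ne : ∀ q, embd (update_le U n₀) q ≠ s₀ := by
    intro q hc
    have h1 : q.1 = n₀ := congrArg Sigma.fst hc
    have h2 : (q.2 : ℕ) = U n₀ - 1 :=
      congrArg (fun z : (n : Fin N) × Fin (U n) => (z.2 : ℕ)) hc
    have h3 := q.2.isLt
    have h4 : Function.update U n₀ (U n₀ - 1) q.1 = U n₀ - 1 := by
      rw [h1, Function.update_self]
    omega
  have hdne : d ≠ 0 := by
    set P := (Y 0).updateRow rI (Pi.single sI 1) with hP
    have hProw : P rI = Pi.single sI 1 := Matrix.updateRow_self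
    set Q := P.updateCol sI (Pi.single rI 1) with hQ
    have hdetPQ : Q.det = P.det := det_updateCol_of_row_single P rI sI hProw
    set W : Matrix (Fin s') (Fin s') K := (BmatOf c U' V').submatrix f' g' with hW
    have hQblocks : Q = (Matrix.fromBlocks W 0 0 (1 : Matrix (Fin 1) (Fin 1) K)).submatrix
        finSumFinEquiv.symm finSumFinEquiv.symm := by
      ext i j
      rcases hsi : finSumFinEquiv.symm i with x | z <;>
        rcases hsj : finSumFinEquiv.symm j with y | w
      all_goals
        have hi' : i = finSumFinEquiv (finSumFinEquiv.symm i) := (Equiv.apply_symm_apply _ _).symm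
        have hj' : j = finSumFinEquiv (finSumFinEquiv.symm j) := (Equiv.apply_symm_apply _ _).symm
        rw [hsi] at hi'
        rw [hsj] at hj'
      · -- inl inl
        have hfi : f i = embd (update_le V m₀) (f' x) := by rw [hi']; exact hfinl x
        have hgj : g j = embd (update_le U n₀) (g' y) := by rw [hj']; exact hginl y
        have hine : i ≠ rI := by
          intro hc
          apply hembdV_ne (f' x)
          rw [← hfi, hc, hrI, Equiv.apply_symm_apply]
        have hjne : j ≠ sI := by
          intro hc
          apply hembdU_ne (g' y)
          rw [← hgj, hc, hsI, Equiv.apply_symm_apply]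
        rw [Matrix.submatrix_apply, hsi, hsj, Matrix.fromBlocks_apply₁₁]
        rw [hQ, Matrix.updateCol_ne hjne, hP, Matrix.updateRow_ne hine]
        rw [hYentry 0 i j, hfi, hgj]
        have hne2 : tme ((embd (update_le V m₀) (f' x)).1, (embd (update_le U n₀) (g' y)).1)
            (((embd (update_le V m₀) (f' x)).2 : ℕ) + ((embd (update_le U n₀) (g' y)).2 : ℕ) + 1)
            ≠ τ + 1 := by
          intro hc
          rw [hchar] at hc
          apply hembdV_ne (f' x)
          obtain ⟨e1, e2, e3, e4⟩ := hc
          exact sigma_fin_ext e1 (e3.trans rfl)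
        rw [Function.update_of_ne hne2]
        simp only [hW, BmatOf, Matrix.submatrix_apply, Matrix.of_apply, embd]
      · -- inl inr : j = sI
        have hgj : g j = s₀ := by rw [hj']; exact hginr w
        have hjeq : j = sI := by rw [hsI, ← hgj, Equiv.symm_apply_apply]
        have hfi : f i = embd (update_le V m₀) (f' x) := by rw [hi']; exact hfinl x
        have hine : i ≠ rI := by
          intro hc
          apply hembdV_ne (f' x)
          rw [← hfi, hc, hrI, Equiv.apply_symm_apply]
        rw [Matrix.submatrix_apply, hsi, hsj, Matrix.fromBlocks_apply₁₂]
        rw [hQ, hjeq, Matrix.updateCol_self]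
        rw [Pi.single_eq_of_ne hine]
        simp
      · -- inr inl : i = rI
        have hfi : f i = r := by rw [hi']; exact hfinr z
        have hieq : i = rI := by rw [hrI, ← hfi, Equiv.symm_apply_apply]
        have hgj : g j = embd (update_le U n₀) (g' y) := by rw [hj']; exact hginl y
        have hjne : j ≠ sI := by
          intro hc
          apply hembdU_ne (g' y)
          rw [← hgj, hc, hsI, Equiv.apply_symm_apply]
        rw [Matrix.submatrix_apply, hsi, hsj, Matrix.fromBlocks_apply₂₁]
        rw [hQ, Matrix.updateCol_ne hjne, hP, hieq, Matrix.updateRow_self]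
        rw [Pi.single_eq_of_ne hjne]
        simp
      · -- inr inr
        have hfi : f i = r := by rw [hi']; exact hfinr z
        have hieq : i = rI := by rw [hrI, ← hfi, Equiv.symm_apply_apply]
        have hgj : g j = s₀ := by rw [hj']; exact hginr w
        have hjeq : j = sI := by rw [hsI, ← hgj, Equiv.symm_apply_apply]
        rw [Matrix.submatrix_apply, hsi, hsj, Matrix.fromBlocks_apply₂₂]
        rw [hQ, hjeq, Matrix.updateCol_self, hieq]
        rw [Pi.single_eq_same]
        rw [Subsingleton.elim z w, Matrix.one_apply_eq]
    have hdetQ : Q.det = W.det := by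
      rw [hQblocks, Matrix.det_submatrix_equiv_self, Matrix.det_fromBlocks_zero₂₁,
        Matrix.det_one, mul_one]
    have hWne : W.det ≠ 0 := hG U' V' hsum' hT' s' f' g'
    intro hc
    rw [hd] at hc
    apply hWne
    rw [← hdetQ, hdetPQ]
    exact hc
  exact ⟨s' + 1, f, g, e₀, d, hdne, haff⟩

end Stmt11

namespace Stmt11

open Matrix Finset Function Equiv

variable {K : Type*} [Field K]

lemma bmat_agree {M N : ℕ} (c c' : ℕ → K) (U : Fin N → ℕ) (V : Fin M → ℕ)
    (h : ∀ t, t ≤ TT U V → c t = c' t) : BmatOf c U V = BmatOf c' U V := by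
  ext p q
  exact h _ (entry_tme_le U V p q)

lemma pi_bounded_finite (N b : ℕ) : {U : Fin N → ℕ | ∀ n, U n ≤ b}.Finite := by
  have heq : {U : Fin N → ℕ | ∀ n, U n ≤ b} = Set.pi Set.univ (fun _ => Set.Iic b) := by
    ext U
    simp [Set.mem_pi, Set.mem_Iic, Pi.le_def]
  rw [heq]
  exact Set.Finite.pi fun _ => Set.finite_Iic _

lemma good_step {M N : ℕ} [Infinite K] (c : ℕ → K) (τ : ℕ) (hG : Good M N c τ) :
    ∃ v : K, Good M N (Function.update c (τ + 1) v) (τ + 1) := by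
  classical
  set S : Set ((Fin N → ℕ) × (Fin M → ℕ)) :=
    {w | (∑ n, w.1 n) = (∑ m, w.2 m) ∧ TT w.1 w.2 = τ + 1} with hS
  have hSfin : S.Finite := by
    have hsub : S ⊆ {U : Fin N → ℕ | ∀ n, U n ≤ τ + 1} ×ˢ
        {V : Fin M → ℕ | ∀ m, V m ≤ τ + 1} := by
      rintro ⟨U, V⟩ ⟨hw1, hw2⟩
      dsimp only at hw1 hw2
      constructor
      · intro n
        show U n ≤ τ + 1
        by_cases hUn : U n = 0
        · omega
        · have hU1 : U n ≤ ∑ n, U n :=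
            Finset.single_le_sum (f := U) (fun i _ => Nat.zero_le _) (Finset.mem_univ n)
          obtain ⟨m, -, hm⟩ := Finset.exists_ne_zero_of_sum_ne_zero
            (show (∑ m, V m) ≠ 0 by omega)
          have hmem : (m, n) ∈ corners U V := by
            simp only [corners, Finset.mem_filter, Finset.mem_univ, true_and]
            exact ⟨by omega, by omega⟩
          have h1 : tme (m, n) (U n + V m - 1) ≤ τ + 1 := by
            rw [← hw2]
            unfold TT
            exact Finset.le_sup (f := fun p : Fin M × Fin N => tme p (U p.2 + V p.1 - 1)) hmem
          have h2 : U n + V m - 1 ≤ tme (m, n) (U n + V m - 1) := self_le_tme _ _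
          omega
      · intro m
        show V m ≤ τ + 1
        by_cases hVm : V m = 0
        · omega
        · have hV1 : V m ≤ ∑ m, V m :=
            Finset.single_le_sum (f := V) (fun i _ => Nat.zero_le _) (Finset.mem_univ m)
          obtain ⟨n, -, hn⟩ := Finset.exists_ne_zero_of_sum_ne_zero
            (show (∑ n, U n) ≠ 0 by omega)
          have hmem : (m, n) ∈ corners U V := by
            simp only [corners, Finset.mem_filter, Finset.mem_univ, true_and]
            exact ⟨by omega, by omega⟩
          have h1 : tme (m, n) (U n + V m - 1) ≤ τ + 1 := by
            rw [← hw2]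
            unfold TT
            exact Finset.le_sup (f := fun p : Fin M × Fin N => tme p (U p.2 + V p.1 - 1)) hmem
          have h2 : U n + V m - 1 ≤ tme (m, n) (U n + V m - 1) := self_le_tme _ _
          omega
    exact Set.Finite.subset (Set.Finite.prod (pi_bounded_finite N (τ + 1))
      (pi_bounded_finite M (τ + 1))) hsub
  have hbad : ∀ w ∈ S, {v : K |
      ¬ NSmat (BmatOf (Function.update c (τ + 1) v) w.1 w.2)}.Subsingleton := by
    rintro ⟨U, V⟩ hw v hv v' hv'
    obtain ⟨hw1, hw2⟩ := hw
    dsimp only at hw1 hw2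
    obtain ⟨s, f, g, e₀, d, hd, haff⟩ := exists_affine c τ hG U V hw1 hw2
    simp only [Set.mem_setOf_eq] at hv hv'
    have h1 : ((BmatOf (Function.update c (τ + 1) v) U V).submatrix f g).det = 0 := by
      by_contra hcon
      exact hv fun s' f' g' => det_transfer _ f g f' g' hcon
    have h2 : ((BmatOf (Function.update c (τ + 1) v') U V).submatrix f g).det = 0 := by
      by_contra hcon
      exact hv' fun s' f' g' => det_transfer _ f g f' g' hcon
    rw [haff v] at h1
    rw [haff v'] at h2
    have h3 : v * d = v' * d := add_left_cancel (h1.trans h2.symm)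
    exact mul_right_cancel₀ hd h3
  have hBadSet : {v : K | ∃ w ∈ S,
      ¬ NSmat (BmatOf (Function.update c (τ + 1) v) w.1 w.2)}.Finite := by
    have heq : {v : K | ∃ w ∈ S, ¬ NSmat (BmatOf (Function.update c (τ + 1) v) w.1 w.2)} =
        ⋃ w ∈ S, {v : K | ¬ NSmat (BmatOf (Function.update c (τ + 1) v) w.1 w.2)} := by
      ext v
      simp
    rw [heq]
    exact Set.Finite.biUnion hSfin fun w hw => Set.Subsingleton.finite (hbad w hw)
  obtain ⟨v, hv⟩ := hBadSet.infinite_compl.nonempty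
  refine ⟨v, ?_⟩
  intro U V hsum hTle
  rcases eq_or_ne (TT U V) (τ + 1) with he | hne
  · by_contra hcon
    exact hv ⟨(U, V), ⟨hsum, he⟩, hcon⟩
  · have hle : TT U V ≤ τ := by omega
    have heqm : BmatOf (Function.update c (τ + 1) v) U V = BmatOf c U V := by
      apply bmat_agree
      intro t ht
      exact Function.update_of_ne (by omega) _ _
    rw [heqm]
    exact hG U V hsum hle

/-- The inductively chosen coefficients: at stage `τ+1` we choose a good value for time `τ+1`. -/
noncomputable def chain (M N : ℕ) (K : Type*) [Field K] [Infinite K] : ℕ → ℕ → K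
  | 0 => fun _ => 0
  | (τ + 1) =>
    if h : ∃ v : K, Good M N (Function.update (chain M N K τ) (τ + 1) v) (τ + 1) then
      Function.update (chain M N K τ) (τ + 1) h.choose
    else chain M N K τ

lemma chain_good (M N : ℕ) (K : Type*) [Field K] [Infinite K] (τ : ℕ) :
    Good M N (chain M N K τ) τ := by
  induction τ with
  | zero => exact good_zero M N _
  | succ τ ih =>
    have hex := good_step (chain M N K τ) τ ih
    rw [chain, dif_pos hex]
    exact hex.choose_spec

lemma chain_agree (M N : ℕ) (K : Type*) [Field K] [Infinite K] (τ' t : ℕ) (ht : t ≤ τ') :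
    ∀ τ'', τ' ≤ τ'' → chain M N K τ'' t = chain M N K τ' t := by
  intro τ'' h
  induction τ'' with
  | zero =>
    have h0 : τ' = 0 := by omega
    rw [h0]
  | succ τ'' ih =>
    rcases eq_or_lt_of_le h with he | hlt
    · rw [he]
    · have h2 : τ' ≤ τ'' := by omega
      rw [← ih h2]
      have hne : t ≠ τ'' + 1 := by omega
      by_cases hex : ∃ v : K, Good M N (Function.update (chain M N K τ'') (τ'' + 1) v) (τ'' + 1)
      · rw [chain, dif_pos hex, Function.update_of_ne hne]
      · rw [chain, dif_neg hex]

lemma rank_submatrix_equiv {ρ γ ι : Type*} [Fintype ρ] [Fintype γ] [Fintype ι]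
    (B : Matrix ρ γ K) (f : ι ≃ ρ) (g : ι ≃ γ) :
    (B.submatrix f g).rank = B.rank := by
  have h : B.submatrix ⇑f ⇑g = Matrix.reindex f.symm g.symm B := by
    ext i j
    simp [Matrix.reindex_apply]
  rw [h, Matrix.rank, Matrix.rank, Matrix.mulVecLin_reindex, LinearMap.range_comp,
    LinearMap.range_comp, LinearEquiv.range, Submodule.map_top, LinearEquiv.finrank_map_eq]

end Stmt11

open Stmt11 in
/-- if `K` is infinite, then for any `M`, `N` there is an `M × N` matrix `A`
with entries in `T` such that every square matrix `M_{U₁,…,U_N;V₁,…,V_M}(A)` with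
`U₁+⋯+U_N = V₁+⋯+V_M` is nonsingular (i.e. has full rank). -/
theorem exists_matrix_all_square_blocks_nonsingular
    {K : Type*} [Field K] [Infinite K] (M N : ℕ) :
    ∃ A : Matrix (Fin M) (Fin N) (LaurentSeries K),
      ∀ (U : Fin N → ℕ) (V : Fin M → ℕ), (∑ n, U n) = (∑ m, V m) →
        (blockM A U V).rank = ∑ n, U n := by
  classical
  set c : ℕ → K := fun t => chain M N K t t with hc
  have hkey : ∀ (U : Fin N → ℕ) (V : Fin M → ℕ), (∑ n, U n) = (∑ m, V m) →
      NSmat (BmatOf c U V) := by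
    intro U V hsum
    have hagree : BmatOf c U V = BmatOf (chain M N K (TT U V)) U V := by
      apply bmat_agree
      intro t ht
      show chain M N K t t = chain M N K (TT U V) t
      exact (chain_agree M N K t t le_rfl (TT U V) ht).symm
    rw [hagree]
    exact chain_good M N K (TT U V) U V hsum le_rfl
  refine ⟨Matrix.of fun m n =>
    (HahnSeries.ofPowerSeries ℤ K) (PowerSeries.mk fun t => c (tme (m, n) t)), ?_⟩
  intro U V hsum
  have hBM : blockM (Matrix.of fun m n =>
      (HahnSeries.ofPowerSeries ℤ K) (PowerSeries.mk fun t => c (tme (m, n) t))) U V =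
      BmatOf c U V := by
    ext p q
    simp only [blockM, hankel, BmatOf, Matrix.of_apply]
    have hcast : ((p.2 : ℤ) + (q.2 : ℤ) + 1) = (((p.2 : ℕ) + (q.2 : ℕ) + 1 : ℕ) : ℤ) := by
      push_cast
      ring
    rw [hcast, HahnSeries.ofPowerSeries_apply_coeff, PowerSeries.coeff_mk]
  rw [hBM]
  have hcR : Fintype.card ((m : Fin M) × Fin (V m)) = ∑ n, U n := by
    have h1 : Fintype.card ((m : Fin M) × Fin (V m)) = ∑ m, V m := by
      simp [Fintype.card_sigma]
    omega
  have hcC : Fintype.card ((n : Fin N) × Fin (U n)) = ∑ n, U n := by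
    simp [Fintype.card_sigma]
  set f0 := (Fintype.equivFinOfCardEq hcR).symm with hf0
  set g0 := (Fintype.equivFinOfCardEq hcC).symm with hg0
  have hdet := hkey U V hsum (∑ n, U n) f0 g0
  have hunit : IsUnit ((BmatOf c U V).submatrix f0 g0) :=
    (Matrix.isUnit_iff_isUnit_det _).mpr (Ne.isUnit hdet)
  have hr1 : ((BmatOf c U V).submatrix f0 g0).rank = ∑ n, U n := by
    rw [Matrix.rank_of_isUnit _ hunit, Fintype.card_fin]
  have hr2 : ((BmatOf c U V).submatrix f0 g0).rank = (BmatOf c U V).rank :=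
    rank_submatrix_equiv _ f0 g0
  rw [← hr2, hr1]
end
end

section
/- Let K be an infinite field and let M, N be positive integers. Then there exists an M×N matrix A with entries in T that is strongly badly approximable. -/
/-!
Write `A = ∑_{i ≥ 1} a_i x⁻ⁱ` with `a_i ∈ K^{M×N}`. If `deg ξ_n < U_n`, the coefficients of
`x⁻¹, …, x^{-V_m}` in `∑_n α_{mn} ξ_n` are the entries of `M_{U;V}(A)` applied to the coefficient
vector of `ξ`. So if every square `M_{U;V}(A)` is nonsingular, then for `U_n = deg ξ_n + 1` the
first nonzero coefficients `x^{-(v_m + 1)}` of the fractional parts satisfy `∑ v_m < ∑ U_n`,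
which is the required inequality with `C₁ = M + N + 1`.

The `a_i` are chosen one at a time. The minors in which `a_{k+1}` first appears are polynomials in
its entries, and none vanishes identically: the variable at the corner of a block with
`V_m + U_n = k + 2` occurs nowhere else, and its coefficient is a smaller such minor. Over an
infinite field, some point avoids the finitely many zero sets.
-/

open scoped BigOperators Classical

noncomputable section

variable {K : Type*} [Field K]

namespace Matrix

variable {R S : Type*} [CommRing R] [CommRing S] {ι κ : Type*} [Fintype ι] [DecidableEq ι]

def IsNonsingular (B : Matrix ι κ R) : Prop :=
  ∃ e : ι ≃ κ, (B.submatrix id e).det ≠ 0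

theorem isNonsingular_of_isEmpty [Nontrivial R] [IsEmpty ι] [IsEmpty κ] (B : Matrix ι κ R) :
    B.IsNonsingular :=
  ⟨Equiv.equivOfIsEmpty ι κ, by rw [det_isEmpty]; exact one_ne_zero⟩

theorem isNonsingular_map_of_det {B : Matrix ι κ R} (f : R →+* S) (e : ι ≃ κ)
    (h : f (B.submatrix id e).det ≠ 0) : (B.map f).IsNonsingular :=
  ⟨e, by rwa [submatrix_map, ← RingHom.mapMatrix_apply, ← RingHom.map_det]⟩

theorem IsNonsingular.map {B : Matrix ι κ R} (hB : B.IsNonsingular) {f : R →+* S}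
    (hf : Function.Injective f) : (B.map f).IsNonsingular :=
  let ⟨e, he⟩ := hB
  isNonsingular_map_of_det f e ((map_ne_zero_iff f hf).mpr he)

theorem IsNonsingular.eq_zero_of_mulVec_eq_zero [Fintype κ] [IsDomain R] {B : Matrix ι κ R}
    (hB : B.IsNonsingular) {v : κ → R} (hv : B *ᵥ v = 0) : v = 0 := by
  obtain ⟨e, he⟩ := hB
  have hsub : B.submatrix id e *ᵥ (v ∘ e) = 0 := by
    rw [submatrix_mulVec_equiv]
    simp [Function.comp_def, hv]
  ext j
  simpa using congrFun (Matrix.eq_zero_of_mulVec_eq_zero he hsub) (e.symm j)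

theorem det_add_single_inr {ρ : Type*} [Fintype ρ] [DecidableEq ρ]
    (B : Matrix (ρ ⊕ Unit) (ρ ⊕ Unit) R) (r : R) :
    (B + single (Sum.inr ()) (Sum.inr ()) r).det = B.det + r * B.toBlocks₁₁.det := by
  have hcol : B + single (Sum.inr ()) (Sum.inr ()) r =
      B.updateCol (Sum.inr ()) ((fun i => B i (Sum.inr ())) + r • Pi.single (Sum.inr ()) 1) := by
    ext i j
    rcases j with j | ⟨⟩ <;> simp [single_apply, Pi.single_apply, eq_comm]
  have hblock : B.updateCol (Sum.inr ()) (Pi.single (Sum.inr ()) 1) =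
      fromBlocks B.toBlocks₁₁ 0 B.toBlocks₂₁ 1 := by
    ext (i | ⟨⟩) (j | ⟨⟩) <;> simp [toBlocks₁₁, toBlocks₂₁]
  rw [hcol, det_updateCol_add, det_updateCol_smul, hblock, det_fromBlocks_zero₁₂, det_one,
    mul_one, updateCol_eq_self]

theorem det_ne_zero_of_map_eq_add_single {ρ : Type*} [Fintype ρ] [DecidableEq ρ]
    {B : Matrix (ρ ⊕ Unit) (ρ ⊕ Unit) R} (σ : R →+* R)
    (hσ : B.map σ = B + single (Sum.inr ()) (Sum.inr ()) 1) (h : B.toBlocks₁₁.det ≠ 0) :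
    B.det ≠ 0 := by
  intro h0
  have hdet := RingHom.map_det σ B
  rw [RingHom.mapMatrix_apply, hσ, det_add_single_inr, h0, map_zero, one_mul, zero_add] at hdet
  exact h hdet.symm

theorem IsNonsingular.of_map_eq_add_single {κ ι' κ' : Type*} [DecidableEq κ] [Fintype ι']
    [DecidableEq ι'] {B : Matrix ι κ R} (Er : ι' ⊕ Unit ≃ ι) (Ec : κ' ⊕ Unit ≃ κ) (σ : R →+* R)
    (hσ : B.map σ = B + single (Er (Sum.inr ())) (Ec (Sum.inr ())) 1)
    (h : (B.submatrix (Er ∘ Sum.inl) (Ec ∘ Sum.inl)).IsNonsingular) : B.IsNonsingular := by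
  obtain ⟨e', he'⟩ := h
  let Ec' : ι' ⊕ Unit ≃ κ := (Equiv.sumCongr e' (Equiv.refl Unit)).trans Ec
  refine ⟨Er.symm.trans Ec', ?_⟩
  have hC : (B.submatrix id (Er.symm.trans Ec')).submatrix Er Er = B.submatrix Er Ec' := by
    ext i j
    simp
  rw [← det_submatrix_equiv_self Er, hC]
  refine det_ne_zero_of_map_eq_add_single σ ?_ he'
  rw [← submatrix_map, hσ]
  ext i j
  rcases j with j | ⟨⟩ <;> simp [Ec', single_apply]

end Matrix

section SigmaFin

variable {ι : Type*}

theorem exists_eq_add_single [DecidableEq ι] {W : ι → ℕ} {p : ι} (hp : 0 < W p) :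
    ∃ W' : ι → ℕ, W = W' + Pi.single p 1 := by
  refine ⟨W - Pi.single p 1, funext fun q => ?_⟩
  rcases eq_or_ne q p with rfl | hq
  · simp only [Pi.add_apply, Pi.sub_apply, Pi.single_eq_same]
    omega
  · simp [hq]

theorem sum_add_single [Fintype ι] [DecidableEq ι] (W : ι → ℕ) (p : ι) :
    ∑ q, (W + Pi.single p 1 : ι → ℕ) q = ∑ q, W q + 1 := by
  simp [Finset.sum_add_distrib]

def sigmaFinAddSingleEquiv [Fintype ι] [DecidableEq ι] (W : ι → ℕ) (p : ι) :
    ((q : ι) × Fin (W q)) ⊕ Unit ≃ (q : ι) × Fin ((W + Pi.single p 1 : ι → ℕ) q) :=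
  Equiv.ofBijective
    (Sum.elim (Sigma.map id fun q => Fin.castLE (Nat.le_add_right _ _))
      fun _ => ⟨p, ⟨W p, by simp⟩⟩) <| by
    refine (Fintype.bijective_iff_injective_and_card _).mpr ⟨?_, ?_⟩
    · refine Function.Injective.sumElim ?_ (fun _ _ _ => rfl) ?_
      · exact Function.injective_id.sigma_map fun q => Fin.castLE_injective _
      rintro ⟨q, i⟩ - h
      obtain ⟨rfl, hi⟩ := Sigma.mk.inj_iff.mp h
      have := congrArg Fin.val (eq_of_heq hi)
      simp only [id_eq, Pi.add_apply, Fin.val_castLE] at this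
      omega
    · simp [Fintype.card_sigma, Finset.sum_add_distrib]

theorem eq_sigmaFinAddSingleEquiv_inr_iff [Fintype ι] [DecidableEq ι] {W : ι → ℕ} {p : ι}
    (x : (q : ι) × Fin ((W + Pi.single p 1 : ι → ℕ) q)) :
    x = sigmaFinAddSingleEquiv W p (Sum.inr ()) ↔ x.1 = p ∧ W p ≤ x.2 := by
  obtain ⟨q, i⟩ := x
  constructor
  · rintro h
    obtain ⟨rfl, hi⟩ := Sigma.mk.inj_iff.mp h
    exact ⟨rfl, (congrArg Fin.val (eq_of_heq hi)).ge⟩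
  · rintro ⟨hq, hi⟩
    dsimp only at hq hi
    subst hq
    have := i.2
    simp only [Pi.add_apply, Pi.single_eq_same] at this
    exact Sigma.ext rfl (heq_of_eq (Fin.ext (by
      simp only [sigmaFinAddSingleEquiv, Equiv.coe_ofBijective, Sum.elim_inr]
      omega)))

theorem exists_le_sum_eq [Fintype ι] [DecidableEq ι] (f : ι → ℕ) {t : ℕ}
    (ht : t ≤ ∑ i, f i) : ∃ g ≤ f, ∑ i, g i = t := by
  induction t with
  | zero => exact ⟨0, fun _ => Nat.zero_le _, by simp⟩
  | succ t ih =>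
    obtain ⟨g, hgf, hg⟩ := ih (Nat.le_of_succ_le ht)
    obtain ⟨i, -, hi⟩ : ∃ i ∈ Finset.univ, g i < f i :=
      Finset.exists_lt_of_sum_lt (hg.trans_lt ht)
    refine ⟨g + Pi.single i 1, fun j => ?_, by rw [sum_add_single, hg]⟩
    rcases eq_or_ne j i with rfl | hj <;> simp [*, hgf j]

theorem exists_sum_lt_of_forall_sum_eq [Fintype ι] [DecidableEq ι]
    (p : ι → ℕ → Prop) (d : ℕ) (h : ∀ w : ι → ℕ, ∑ m, w m = d → ∃ m, ∃ i < w m, p m i) :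
    ∃ v : ι → ℕ, (∀ m, p m (v m)) ∧ ∑ m, v m < d := by
  have hex : ∀ m, ∃ i, p m i := fun m => by
    obtain ⟨m', i, hi, hp⟩ := h (Pi.single m d) (by simp)
    rcases eq_or_ne m' m with rfl | hm
    · exact ⟨i, hp⟩
    · simp [hm] at hi
  refine ⟨fun m => Nat.find (hex m), fun m => Nat.find_spec (hex m), ?_⟩
  by_contra! hd
  obtain ⟨w, hw, hwd⟩ := exists_le_sum_eq _ hd
  obtain ⟨m, i, hi, hp⟩ := h w hwd
  exact Nat.find_min (hex m) (hi.trans_le (hw m)) hp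

end SigmaFin

section BlockHankel

variable {R : Type*} {ι κ : Type*}

/-- `M_{U;V}` of the matrix `∑ i, a i x⁻ⁱ` (cf. `blockM_ofCoeffs`), over any coefficient ring. -/
def blockHankel (a : ℕ → Matrix ι κ R) (U : κ → ℕ) (V : ι → ℕ) :
    Matrix ((m : ι) × Fin (V m)) ((n : κ) × Fin (U n)) R :=
  Matrix.of fun x y => a (x.2 + y.2 + 1) x.1 y.1

/-- Every entry of `blockHankel a U V` is an entry of some `a i` with `i ≤ k`. -/
def HankelShapeLE (U : κ → ℕ) (V : ι → ℕ) (k : ℕ) : Prop :=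
  ∀ m n, 0 < V m → 0 < U n → V m + U n ≤ k + 1

namespace HankelShapeLE

variable {U U' : κ → ℕ} {V V' : ι → ℕ} {k : ℕ}

theorem symm (h : HankelShapeLE U V k) : HankelShapeLE V U k :=
  fun n m hU hV => (add_comm (U n) (V m)).trans_le (h m n hV hU)

theorem of_le (h : HankelShapeLE U V k) (hU : U' ≤ U) (hV : V' ≤ V) : HankelShapeLE U' V' k :=
  fun m n hm hn => (add_le_add (hV m) (hU n)).trans
    (h m n (hm.trans_le (hV m)) (hn.trans_le (hU n)))

theorem index_le (h : HankelShapeLE U V k) (x : (m : ι) × Fin (V m)) (y : (n : κ) × Fin (U n)) :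
    (x.2 : ℕ) + y.2 + 1 ≤ k := by
  have := h x.1 y.1 (Nat.zero_lt_of_lt x.2.2) (Nat.zero_lt_of_lt y.2.2)
  omega

theorem le_of_sum_eq [Fintype ι] [Fintype κ] (h : HankelShapeLE U V k)
    (hUV : ∑ n, U n = ∑ m, V m) (n : κ) : U n ≤ k := by
  rcases Nat.eq_zero_or_pos (U n) with hn | hn
  · omega
  obtain ⟨m, -, hm⟩ : ∃ m ∈ Finset.univ, 0 < V m := by
    rw [← Finset.sum_pos_iff, ← hUV]
    exact hn.trans_le (Finset.single_le_sum (fun _ _ => Nat.zero_le _) (Finset.mem_univ n))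
  have := h m n hm hn
  omega

end HankelShapeLE

theorem blockHankel_congr {a b : ℕ → Matrix ι κ R} {U : κ → ℕ} {V : ι → ℕ} {k : ℕ}
    (hab : ∀ i ≤ k, a i = b i) (hk : HankelShapeLE U V k) :
    blockHankel a U V = blockHankel b U V := by
  ext x y
  simp [blockHankel, hab _ (hk.index_le x y)]

variable [Fintype ι] [DecidableEq ι] [Fintype κ]

def BlockHankelNonsingularUpTo [CommRing R] (a : ℕ → Matrix ι κ R) (k : ℕ) : Prop :=
  ∀ U V, ∑ n, U n = ∑ m, V m → HankelShapeLE U V k → (blockHankel a U V).IsNonsingular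

theorem blockHankelNonsingularUpTo_zero [CommRing R] [Nontrivial R] (a : ℕ → Matrix ι κ R) :
    BlockHankelNonsingularUpTo a 0 := by
  intro U V hUV hk
  have hU : ∀ n, U n = 0 := fun n => Nat.le_zero.mp (hk.le_of_sum_eq hUV n)
  have hV : ∀ m, V m = 0 := fun m => Nat.le_zero.mp (hk.symm.le_of_sum_eq hUV.symm m)
  have : IsEmpty ((m : ι) × Fin (V m)) := ⟨fun x => by have := x.2.2; have := hV x.1; omega⟩
  have : IsEmpty ((n : κ) × Fin (U n)) := ⟨fun y => by have := y.2.2; have := hU y.1; omega⟩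
  exact Matrix.isNonsingular_of_isEmpty _

variable [DecidableEq κ]

/-- `b (V m + U n + 1) m n` is the entry at the new corner of the `(m, n)` block. -/
theorem isNonsingular_blockHankel_add_single [CommRing R] {b : ℕ → Matrix ι κ R}
    {U : κ → ℕ} {V : ι → ℕ} {m : ι} {n : κ} (σ : R →+* R)
    (hσ : ∀ i m' n',
      σ (b i m' n') = b i m' n' + if i = V m + U n + 1 ∧ m' = m ∧ n' = n then 1 else 0)
    (h : (blockHankel b U V).IsNonsingular) :
    (blockHankel b (U + Pi.single n 1) (V + Pi.single m 1)).IsNonsingular := by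
  refine Matrix.IsNonsingular.of_map_eq_add_single (sigmaFinAddSingleEquiv V m)
    (sigmaFinAddSingleEquiv U n) σ ?_ h
  ext ⟨m', i⟩ ⟨n', j⟩
  simp only [Matrix.map_apply, Matrix.add_apply, Matrix.single_apply, blockHankel, Matrix.of_apply,
    hσ, eq_comm (a := sigmaFinAddSingleEquiv _ _ _), eq_sigmaFinAddSingleEquiv_inr_iff]
  congr 2
  have hi := i.2
  have hj := j.2
  by_cases hm : m' = m <;> by_cases hn : n' = n <;> simp_all
  omega

end BlockHankel

theorem MvPolynomial.exists_forall_eval_ne_zero [Infinite K] {σ ι : Type*} [Finite ι]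
    (p : ι → MvPolynomial σ K) (hp : ∀ i, p i ≠ 0) : ∃ x, ∀ i, eval x (p i) ≠ 0 := by
  have := Fintype.ofFinite ι
  have hprod : ∏ i, p i ≠ 0 := Finset.prod_ne_zero_iff.mpr fun i _ => hp i
  by_contra! h
  refine hprod (MvPolynomial.funext fun x => ?_)
  obtain ⟨i, hi⟩ := h x
  rw [map_prod, map_zero]
  exact Finset.prod_eq_zero (Finset.mem_univ i) hi

theorem exists_forall_of_extend {α : Type*} (P : ℕ → (ℕ → α) → Prop)
    (hP : ∀ k a b, (∀ i ≤ k, a i = b i) → P k a → P k b) {a₀ : ℕ → α} (h₀ : P 0 a₀)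
    (hstep : ∀ k a, P k a → ∃ b, (∀ i ≤ k, b i = a i) ∧ P (k + 1) b) : ∃ a, ∀ k, P k a := by
  choose next hnext using hstep
  let seq : (k : ℕ) → {a // P k a} :=
    fun k => Nat.rec ⟨a₀, h₀⟩ (fun k s => ⟨next k s.1 s.2, (hnext k s.1 s.2).2⟩) k
  have hseq : ∀ k, ∀ i ≤ k, (seq k).1 i = (seq i).1 i := by
    intro k
    induction k with
    | zero => intro i hi; rw [Nat.le_zero.mp hi]
    | succ k ih =>
      intro i hi
      rcases Nat.lt_or_eq_of_le hi with hi | rfl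
      · exact ((hnext k _ _).1 i (Nat.lt_succ_iff.mp hi)).trans (ih i (Nat.lt_succ_iff.mp hi))
      · rfl
  exact ⟨fun i => (seq i).1 i, fun k => hP k _ _ (hseq k) (seq k).2⟩

section Generic

open MvPolynomial

variable {ι κ : Type*}

def genericAt (a : ℕ → Matrix ι κ K) (k : ℕ) : ℕ → Matrix ι κ (MvPolynomial (ι × κ) K) :=
  Function.update (fun i => (a i).map C) k (Matrix.of fun m n => X (m, n))

theorem map_eval_genericAt (a : ℕ → Matrix ι κ K) (k : ℕ) (x : ι × κ → K) (i : ℕ) :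
    (genericAt a k i).map (eval x) = Function.update a k (Matrix.of fun m n => x (m, n)) i := by
  rcases eq_or_ne i k with rfl | hi
  · ext; simp [genericAt]
  · ext; simp [genericAt, hi]

theorem aeval_shift_genericAt [DecidableEq ι] [DecidableEq κ] (a : ℕ → Matrix ι κ K) (k : ℕ)
    (p : ι × κ) (i : ℕ) (m : ι) (n : κ) :
    aeval (Function.update X p (X p + 1)) (genericAt a k i m n) =
      genericAt a k i m n + if i = k ∧ m = p.1 ∧ n = p.2 then 1 else 0 := by
  rcases eq_or_ne i k with rfl | hi
  · rcases eq_or_ne (m, n) p with rfl | hp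
    · simp [genericAt]
    · have : ¬(m = p.1 ∧ n = p.2) := fun h => hp (Prod.ext h.1 h.2)
      simp [genericAt, Function.update_of_ne hp, this]
  · simp [genericAt, hi]

variable [Fintype ι] [DecidableEq ι] [Fintype κ] [DecidableEq κ]

theorem BlockHankelNonsingularUpTo.genericAt_succ {a : ℕ → Matrix ι κ K} {k : ℕ}
    (ha : BlockHankelNonsingularUpTo a k) :
    BlockHankelNonsingularUpTo (genericAt a (k + 1)) (k + 1) := by
  intro U V
  induction hs : ∑ m, V m using Nat.strong_induction_on generalizing U V with
  | _ s ih =>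
  intro hUV hk
  by_cases hsmall : HankelShapeLE U V k
  · rw [blockHankel_congr (b := fun i => (a i).map C)
      (fun i hi => Function.update_of_ne (by omega) _ _) hsmall]
    exact (ha U V (hUV.trans hs.symm) hsmall).map (C_injective _ _)
  obtain ⟨m, n, hm, hn, hmn⟩ : ∃ m n, 0 < V m ∧ 0 < U n ∧ k + 1 < V m + U n := by
    simpa [HankelShapeLE] using hsmall
  have hcorner := hk m n hm hn
  obtain ⟨V', rfl⟩ := exists_eq_add_single hm
  obtain ⟨U', rfl⟩ := exists_eq_add_single hn
  simp only [Pi.add_apply, Pi.single_eq_same] at hcorner hmn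
  rw [sum_add_single] at hs hUV
  refine isNonsingular_blockHankel_add_single
    (aeval (Function.update X (m, n) (X (m, n) + 1))).toRingHom (fun i m' n' => ?_) ?_
  · rw [show V' m + U' n + 1 = k + 1 by omega]
    exact aeval_shift_genericAt a (k + 1) (m, n) i m' n'
  · exact ih _ (by omega) U' V' rfl (by omega) (hk.of_le le_self_add le_self_add)

theorem BlockHankelNonsingularUpTo.exists_update [Infinite K]
    {a : ℕ → Matrix ι κ K} {k : ℕ} (ha : BlockHankelNonsingularUpTo a k) :
    ∃ c, BlockHankelNonsingularUpTo (Function.update a (k + 1) c) (k + 1) := by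
  let S : Set ((κ → ℕ) × (ι → ℕ)) :=
    {s | ∑ n, s.1 n = ∑ m, s.2 m ∧ HankelShapeLE s.1 s.2 (k + 1)}
  have hS : S.Finite := by
    refine ((Set.Finite.pi fun _ => Set.finite_Iic (k + 1)).prod
      (Set.Finite.pi fun _ => Set.finite_Iic (k + 1))).subset fun s hs => ?_
    exact ⟨fun n _ => hs.2.le_of_sum_eq hs.1 n, fun m _ => hs.2.symm.le_of_sum_eq hs.1.symm m⟩
  have := hS.to_subtype
  choose e he using fun s : S => ha.genericAt_succ s.1.1 s.1.2 s.2.1 s.2.2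
  obtain ⟨x, hx⟩ := MvPolynomial.exists_forall_eval_ne_zero _ he
  refine ⟨Matrix.of fun m n => x (m, n), fun U V hUV hk => ?_⟩
  have hmap : (blockHankel (genericAt a (k + 1)) U V).map (MvPolynomial.eval x) =
      blockHankel (Function.update a (k + 1) (Matrix.of fun m n => x (m, n))) U V := by
    ext
    simp [blockHankel, ← map_eval_genericAt]
  rw [← hmap]
  exact Matrix.isNonsingular_map_of_det _ _ (hx ⟨(U, V), hUV, hk⟩)

theorem exists_forall_isNonsingular_blockHankel [Infinite K] :
    ∃ a : ℕ → Matrix ι κ K,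
      ∀ U V, ∑ n, U n = ∑ m, V m → (blockHankel a U V).IsNonsingular := by
  obtain ⟨a, ha⟩ := exists_forall_of_extend
    (fun k (a : ℕ → Matrix ι κ K) => BlockHankelNonsingularUpTo a k)
    (fun k a b hab h U V hUV hk => blockHankel_congr hab hk ▸ h U V hUV hk)
    (blockHankelNonsingularUpTo_zero 0) fun k a h => by
      obtain ⟨c, hc⟩ := h.exists_update
      exact ⟨_, fun i hi => Function.update_of_ne (by omega) _ _, hc⟩
  refine ⟨a, fun U V hUV => ha (∑ n, U n + ∑ m, V m) U V hUV fun m n _ _ => ?_⟩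
  have hm := Finset.single_le_sum (fun m _ => Nat.zero_le (V m)) (Finset.mem_univ m)
  have hn := Finset.single_le_sum (fun n _ => Nat.zero_le (U n)) (Finset.mem_univ n)
  omega

end Generic

section Laurent

theorem toL_eq_sum (P : Polynomial K) {D : ℕ} (hD : P.natDegree < D) :
    toL P = ∑ j ∈ Finset.range D, HahnSeries.single (-(j : ℤ)) (P.coeff j) := by
  rw [toL, Polynomial.aeval_def, Polynomial.eval₂_eq_sum_range' _ hD]
  refine Finset.sum_congr rfl fun j _ => ?_
  rw [xL, HahnSeries.single_pow, HahnSeries.algebraMap_apply', ← PowerSeries.C_eq_algebraMap,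
    HahnSeries.ofPowerSeries_C, HahnSeries.C_apply, HahnSeries.single_mul_single]
  simp

theorem coeff_mul_toL (α : LaurentSeries K) (P : Polynomial K) {D : ℕ} (hD : P.natDegree < D)
    (z : ℤ) : (α * toL P).coeff z = ∑ j ∈ Finset.range D, α.coeff (z + j) * P.coeff j := by
  rw [toL_eq_sum P hD, Finset.mul_sum, ← HahnSeries.coeff.addMonoidHom_apply, map_sum]
  refine Finset.sum_congr rfl fun j _ => ?_
  rw [HahnSeries.coeff.addMonoidHom_apply, ← HahnSeries.coeff_mul_single_add (b := -(j : ℤ))]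
  simp

theorem coeff_toL_of_pos (P : Polynomial K) {z : ℤ} (hz : 0 < z) : (toL P).coeff z = 0 := by
  rw [← one_mul (toL P), coeff_mul_toL 1 P (Nat.lt_succ_self _)]
  refine Finset.sum_eq_zero fun j _ => ?_
  rw [HahnSeries.coeff_one, if_neg (by omega), zero_mul]

theorem coeff_toL_neg (P : Polynomial K) (j : ℕ) : (toL P).coeff (-(j : ℤ)) = P.coeff j := by
  rw [← one_mul (toL P), coeff_mul_toL 1 P (lt_max_of_lt_left (Nat.lt_succ_self _) :
    P.natDegree < max (P.natDegree + 1) (j + 1))]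
  simp [HahnSeries.coeff_one, neg_add_eq_zero]

theorem exp_neg_le_absL {F : LaurentSeries K} {z : ℤ} (h : F.coeff z ≠ 0) :
    Real.exp (-z) ≤ absL F := by
  have hF : F ≠ 0 := fun hF => h (by simp [hF])
  rw [absL, if_neg hF, Real.exp_le_exp, neg_le_neg_iff, Int.cast_le]
  exact HahnSeries.order_le_of_coeff_ne_zero h

theorem exp_natDegree_le_max_absL_toL (P : Polynomial K) :
    Real.exp P.natDegree ≤ max (absL (toL P)) 1 := by
  rcases eq_or_ne P 0 with rfl | hP
  · simp
  · refine le_max_of_le_left ?_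
    simpa using exp_neg_le_absL (z := -(P.natDegree : ℤ)) (by
      rw [coeff_toL_neg]; exact Polynomial.leadingCoeff_ne_zero.mpr hP)

theorem exp_neg_le_normL {G : LaurentSeries K} {z : ℤ} (hz : 0 < z) (h : G.coeff z ≠ 0) :
    Real.exp (-z) ≤ normL G := by
  refine le_csInf ⟨_, 0, rfl⟩ ?_
  rintro _ ⟨P, rfl⟩
  refine exp_neg_le_absL ?_
  rwa [HahnSeries.coeff_sub, coeff_toL_of_pos P hz, sub_zero]

/-- The matrix `∑ i, a i x⁻ⁱ`; `a 0` only adds a polynomial, invisible in `T`. -/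
def ofCoeffs {ι κ : Type*} (a : ℕ → Matrix ι κ K) : Matrix ι κ (LaurentSeries K) :=
  Matrix.of fun m n => (PowerSeries.mk fun i => a i m n : LaurentSeries K)

theorem blockM_ofCoeffs {M N : ℕ} (a : ℕ → Matrix (Fin M) (Fin N) K) (U : Fin N → ℕ)
    (V : Fin M → ℕ) : blockM (ofCoeffs a) U V = blockHankel a U V := by
  ext x y
  have : ((x.2 : ℕ) : ℤ) + (y.2 : ℕ) + 1 = ((x.2 + y.2 + 1 : ℕ) : ℤ) := by push_cast; ring
  simp only [blockM, hankel, ofCoeffs, blockHankel, Matrix.of_apply]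
  rw [this, LaurentSeries.coeff_coe_powerSeries, PowerSeries.coeff_mk]

theorem blockM_mulVec_coeff {M N : ℕ} (A : Matrix (Fin M) (Fin N) (LaurentSeries K))
    (ξ : Fin N → Polynomial K) (V : Fin M → ℕ) (x : (m : Fin M) × Fin (V m)) :
    (blockM A (fun n => (ξ n).natDegree + 1) V).mulVec (fun y => (ξ y.1).coeff y.2) x =
      (∑ n, A x.1 n * toL (ξ n)).coeff ((x.2 : ℤ) + 1) := by
  rw [← HahnSeries.coeff.addMonoidHom_apply, map_sum, Matrix.mulVec, dotProduct,
    ← Finset.univ_sigma_univ, Finset.sum_sigma]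
  refine Finset.sum_congr rfl fun n _ => ?_
  rw [HahnSeries.coeff.addMonoidHom_apply, coeff_mul_toL _ _ (Nat.lt_succ_self _),
    ← Fin.sum_univ_eq_sum_range (fun j => (A x.1 n).coeff ((x.2 : ℤ) + 1 + j) * (ξ n).coeff j)]
  refine Finset.sum_congr rfl fun j _ => ?_
  simp only [blockM, hankel, Matrix.of_apply]
  ring_nf

theorem exists_coeff_ne_zero_of_isNonsingular {M N : ℕ}
    {A : Matrix (Fin M) (Fin N) (LaurentSeries K)}
    (hA : ∀ U V, ∑ n, U n = ∑ m, V m → (blockM A U V).IsNonsingular)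
    {ξ : Fin N → Polynomial K} (hξ : ξ ≠ 0) (V : Fin M → ℕ)
    (hV : ∑ n, ((ξ n).natDegree + 1) = ∑ m, V m) :
    ∃ m, ∃ i < V m, (∑ n, A m n * toL (ξ n)).coeff ((i : ℤ) + 1) ≠ 0 := by
  by_contra! h
  obtain ⟨n, hn⟩ := Function.ne_iff.mp hξ
  have hker := (hA _ V hV).eq_zero_of_mulVec_eq_zero (v := fun y => (ξ y.1).coeff y.2)
    (funext fun x => (blockM_mulVec_coeff A ξ V x).trans (h x.1 x.2 x.2.2))
  exact Polynomial.leadingCoeff_ne_zero.mpr hn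
    (congrFun hker ⟨n, ⟨(ξ n).natDegree, Nat.lt_succ_self _⟩⟩)

theorem stronglyBadlyApproximable_of_isNonsingular_blockM {M N : ℕ}
    {A : Matrix (Fin M) (Fin N) (LaurentSeries K)}
    (hA : ∀ U V, ∑ n, U n = ∑ m, V m → (blockM A U V).IsNonsingular) :
    StronglyBadlyApproximable A := by
  refine ⟨M + N + 1, by positivity, fun ξ hξ => ?_⟩
  obtain ⟨v, hv, hvd⟩ := exists_sum_lt_of_forall_sum_eq _ _
    fun V hV => exists_coeff_ne_zero_of_isNonsingular hA hξ V hV.symm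
  have hG : Real.exp (-∑ m, ((v m : ℝ) + 1)) ≤ ∏ m, normL (∑ n, A m n * toL (ξ n)) := by
    rw [← Finset.sum_neg_distrib, Real.exp_sum]
    exact Finset.prod_le_prod (fun _ _ => (Real.exp_pos _).le) fun m _ => by
      exact_mod_cast exp_neg_le_normL (by positivity) (hv m)
  have hP : Real.exp (∑ n, ((ξ n).natDegree : ℝ)) ≤ ∏ n, max (absL (toL (ξ n))) 1 := by
    rw [Real.exp_sum]
    exact Finset.prod_le_prod (fun _ _ => (Real.exp_pos _).le)
      fun n _ => exp_natDegree_le_max_absL_toL _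
  have hvd' : ∑ m, (v m : ℝ) + 1 ≤ ∑ n, ((ξ n).natDegree : ℝ) + N := by
    have : ∑ m, v m + 1 ≤ ∑ n, (ξ n).natDegree + N := by simpa [Finset.sum_add_distrib] using hvd
    exact_mod_cast this
  calc Real.exp (-(M + N + 1 : ℝ))
      < Real.exp (-∑ m, ((v m : ℝ) + 1)) * Real.exp (∑ n, ((ξ n).natDegree : ℝ)) := by
        rw [← Real.exp_add, Real.exp_lt_exp]
        simp only [Finset.sum_add_distrib, Finset.sum_const, Finset.card_univ, Fintype.card_fin,
          nsmul_eq_mul, mul_one]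
        linarith
    _ ≤ _ := mul_le_mul hG hP (Real.exp_pos _).le ((Real.exp_pos _).le.trans hG)

end Laurent

theorem exists_sba_matrix_general {K : Type*} [Field K] [Infinite K]
    (M N : ℕ) :
    ∃ A : Matrix (Fin M) (Fin N) (LaurentSeries K),
      StronglyBadlyApproximable A := by
  obtain ⟨a, ha⟩ := exists_forall_isNonsingular_blockHankel (K := K) (ι := Fin M) (κ := Fin N)
  exact ⟨ofCoeffs a, stronglyBadlyApproximable_of_isNonsingular_blockM fun U V hUV =>
    blockM_ofCoeffs a U V ▸ ha U V hUV⟩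

/-- if `K` is infinite, then for any positive integers `M`, `N` there exists
a strongly badly approximable `M × N` matrix with entries in `T`. -/
theorem exists_sba_matrix {K : Type*} [Field K] [Infinite K]
    (M N : ℕ) (hM : 0 < M) (hN : 0 < N) :
    ∃ A : Matrix (Fin M) (Fin N) (LaurentSeries K),
      StronglyBadlyApproximable A :=
  exists_sba_matrix_general M N
end
end

section
/- Let K be an infinite field and let A' = (α_{mn})_{1≤m≤M, 1≤n≤N} be an M×N matrix with entries in T such that every square matrix M_{U₁,…,U_N;V₁,…,V_M}(A') with U₁+⋯+U_N = V₁+⋯+V_M is nonsingular. Then there exist entries α_{1,N+1},…,α_{M,N+1} ∈ T such that the M×(N+1) matrix A obtained by appending this column to A' has the same property: every square matrix M_{U₁,…,U_{N+1};V₁,…,V_M}(A) with U₁+⋯+U_{N+1} = V₁+⋯+V_M is nonsingular. -/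
open scoped BigOperators Classical

noncomputable section

variable {K : Type*} [Field K]

/-!
The new column is `c_m = ∑_k s_k ^ (m + 1) x^(-k)` for scalars `s_k` chosen one at a time.
Call `max_m V_m + U_{N+1}` the stage of `(U, V)`. A block matrix of stage `k + 1` involves only
`s_0, …, s_k`, and `s_k` occurs only in the last column of the new block, in the last row of each
block row `m` with `V_m` maximal, as `s_k ^ (m + 1)`. Expanding along that column, its
determinant is a polynomial in `s_k` whose coefficient of `s_k ^ (m + 1)` is, up to sign, the
determinant of the block matrix with that row and column deleted. This is again a block matrix,
of stage at most `k`, hence nonsingular. So each of the finitely many block matrices of stage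
`k + 1` is singular for only finitely many values of `s_k`, and as `K` is infinite some `s_k`
avoids them all.
-/

open Polynomial Function

section LinearAlgebra

variable {ι κ ι' κ' : Type*}

theorem Matrix.rank_eq_card_iff_injective_mulVec [Fintype κ] (B : Matrix ι κ K) :
    B.rank = Fintype.card κ ↔ Injective B.mulVec := by
  have hdim := B.mulVecLin.finrank_range_add_finrank_ker
  rw [Module.finrank_fintype_fun_eq_card] at hdim
  rw [← Matrix.coe_mulVecLin, ← LinearMap.ker_eq_bot, ← Submodule.finrank_eq_zero, Matrix.rank]
  omega

theorem Matrix.injective_mulVec_updateCol_single [Fintype κ] [Fintype κ'] [DecidableEq ι]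
    [DecidableEq κ] (B : Matrix ι κ K) {r : ι} {c : κ} (f : ι' → ι) (g : κ' → κ) (hg : Injective g)
    (hf : ∀ x, f x ≠ r) (hrange : ∀ j, j ∈ Set.range g ↔ j ≠ c)
    (h : Injective (B.submatrix f g).mulVec) :
    Injective (B.updateCol c (Pi.single r 1)).mulVec := by
  rw [← Matrix.coe_mulVecLin, injective_iff_map_eq_zero]
  intro v hv
  have hrow : ∀ i, ∑ j, B.updateCol c (Pi.single r 1) i j * v j = 0 := congrFun hv
  have hvg : v ∘ g = 0 := h <| by
    ext x
    rw [Matrix.mulVec_zero, Pi.zero_apply, ← hrow (f x)]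
    refine Fintype.sum_of_injective g hg _ _ (fun j hj => ?_) (fun y => ?_)
    · rw [of_not_not (mt (hrange j).2 hj), Matrix.updateCol_self, Pi.single_eq_of_ne (hf x),
        zero_mul]
    · rw [Matrix.updateCol_ne ((hrange _).1 ⟨y, rfl⟩)]
      rfl
  have hoff : ∀ j, j ≠ c → v j = 0 := fun j hj => by
    obtain ⟨y, rfl⟩ := (hrange j).2 hj
    exact congrFun hvg y
  have hc : v c = 0 := by
    have hr := hrow r
    rwa [Finset.sum_eq_single c (fun j _ hj => by rw [hoff j hj, mul_zero]) (by simp),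
      Matrix.updateCol_self, Pi.single_eq_same, one_mul] at hr
  funext j
  by_cases hj : j = c
  · rw [hj, hc]; rfl
  · exact hoff j hj

theorem Matrix.det_updateCol_eq_sum [Fintype ι] [DecidableEq ι] (B : Matrix ι ι K) (c : ι)
    (v : ι → K) :
    (B.updateCol c v).det = ∑ i, v i * (B.updateCol c (Pi.single i 1)).det := by
  conv_lhs => rw [← Finset.univ_sum_single v]
  simp_rw [← Matrix.cramer_apply, map_sum, Finset.sum_apply]
  refine Finset.sum_congr rfl fun i _ => ?_
  rw [← smul_eq_mul, ← Pi.smul_apply, ← map_smul, ← Pi.single_smul, smul_eq_mul, mul_one]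

theorem Matrix.finite_setOf_rank_updateCol_eval_ne [Fintype ι] [Fintype κ] [DecidableEq ι]
    [DecidableEq κ] (B : Matrix ι κ K) (e : ι ≃ κ) (c : κ) (w : ι → K[X]) {r : ι} {d : ℕ}
    (hr : (w r).coeff d ≠ 0) (hw : ∀ i, i ≠ r → (w i).coeff d = 0)
    (hcof : Injective (B.updateCol c (Pi.single r 1)).mulVec) :
    {t : K | (B.updateCol c fun i => (w i).eval t).rank ≠ Fintype.card κ}.Finite := by
  have hsq : ∀ v : ι → K, (B.updateCol c v).submatrix (Equiv.refl ι) e =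
      (B.submatrix (Equiv.refl ι) e).updateCol (e.symm c) v := fun v => by
    rw [Matrix.submatrix_updateCol_equiv]; rfl
  set cof : ι → K := fun i => ((B.submatrix (Equiv.refl ι) e).updateCol (e.symm c)
    (Pi.single i 1)).det
  -- by cofactor expansion along column `e.symm c`, `p.eval t` is the determinant of the
  -- squared-up matrix
  set p : K[X] := ∑ i, C (cof i) * w i
  have hcof_r : cof r ≠ 0 := by
    rw [← isUnit_iff_ne_zero, ← Matrix.isUnit_iff_isUnit_det, ← Matrix.mulVec_injective_iff_isUnit,
      ← Matrix.rank_eq_card_iff_injective_mulVec, ← hsq, Matrix.rank_submatrix,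
      (Matrix.rank_eq_card_iff_injective_mulVec _).2 hcof, Fintype.card_congr e]
  have hp : p ≠ 0 := fun hp0 => by
    have hd := congrArg (coeff · d) hp0
    simp only [p, finsetSum_coeff, coeff_C_mul, coeff_zero] at hd
    rw [Finset.sum_eq_single r (fun i _ hi => by rw [hw i hi, mul_zero]) (by simp)] at hd
    exact mul_ne_zero hcof_r hr hd
  refine (finite_setOfPred_isRoot hp).subset fun t ht => by_contra fun hroot => ht ?_
  rw [← Matrix.rank_submatrix _ (Equiv.refl ι) e, hsq, Matrix.rank_of_isUnit, Fintype.card_congr e]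
  rw [Matrix.isUnit_iff_isUnit_det, isUnit_iff_ne_zero, Matrix.det_updateCol_eq_sum]
  simpa [p, cof, eval_finsetSum, mul_comm] using hroot

end LinearAlgebra

theorem exists_forall_of_forall_exists_extend {α : Type*} (P : (ℕ → α) → ℕ → Prop)
    (hP : ∀ f g k, (∀ i < k, f i = g i) → P f k → P g k) {f₀ : ℕ → α} (h₀ : P f₀ 0)
    (hstep : ∀ f k, P f k → ∃ g, (∀ i < k, g i = f i) ∧ P g (k + 1)) :
    ∃ f, ∀ k, P f k := by
  have : Nonempty (ℕ → α) := ⟨f₀⟩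
  choose! next hnext using hstep
  let seq : ℕ → ℕ → α := fun k => Nat.rec f₀ (fun k f => next f k) k
  have hseq : ∀ k, P (seq k) k := fun k => by
    induction k with
    | zero => exact h₀
    | succ k ih => exact (hnext _ k ih).2
  have hlim : ∀ k, ∀ i < k, seq (i + 1) i = seq k i := fun k => by
    induction k with
    | zero => intro i hi; omega
    | succ k ih =>
      intro i hi
      rcases Nat.lt_succ_iff_lt_or_eq.1 hi with hik | rfl
      · rw [ih i hik, ← (hnext _ k (hseq k)).1 i hik]
      · rfl
  exact ⟨fun i => seq (i + 1) i, fun k => hP _ _ k (fun i hi => (hlim k i hi).symm) (hseq k)⟩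

theorem sum_tsub_single_one {ι : Type*} [Fintype ι] [DecidableEq ι] (W : ι → ℕ) {i : ι}
    (h : 0 < W i) : ∑ j, (W - Pi.single i 1 : ι → ℕ) j = ∑ j, W j - 1 := by
  simp only [Pi.sub_apply]
  rw [Finset.sum_tsub_distrib _ fun j _ => ?_, Finset.sum_pi_single' i 1,
    if_pos (Finset.mem_univ i)]
  by_cases hj : j = i
  · subst hj; simpa [Nat.one_le_iff_ne_zero, Nat.pos_iff_ne_zero] using h
  · simp [hj]

section BlockIndices

variable {ι : Type*}

def lastInBlock (W : ι → ℕ) (i : ι) (h : 0 < W i) : (j : ι) × Fin (W j) :=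
  ⟨i, W i - 1, Nat.sub_one_lt_of_lt h⟩

theorem eq_lastInBlock_iff {W : ι → ℕ} {i : ι} {h : 0 < W i} {q : (j : ι) × Fin (W j)} :
    q = lastInBlock W i h ↔ q.1 = i ∧ (q.2 : ℕ) = W i - 1 := by
  constructor
  · rintro rfl
    exact ⟨rfl, rfl⟩
  · obtain ⟨j, b⟩ := q
    rintro ⟨rfl, hb⟩
    exact congrArg (Sigma.mk j) (Fin.ext hb)

def blockCastLE {W' W : ι → ℕ} (h : W' ≤ W) : (i : ι) × Fin (W' i) → (i : ι) × Fin (W i) :=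
  Sigma.map id fun i => Fin.castLE (h i)

theorem blockCastLE_injective {W' W : ι → ℕ} (h : W' ≤ W) : Injective (blockCastLE h) :=
  injective_id.sigma_map fun i => Fin.castLE_injective (h i)

theorem mem_range_blockCastLE_iff [DecidableEq ι] {W : ι → ℕ} {i : ι} (h : 0 < W i)
    (q : (j : ι) × Fin (W j)) :
    q ∈ Set.range (blockCastLE (tsub_le_self : W - Pi.single i 1 ≤ W)) ↔
      q ≠ lastInBlock W i h := by
  rw [Ne, eq_lastInBlock_iff]
  constructor
  · rintro ⟨⟨j, b⟩, rfl⟩ ⟨hj, hb⟩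
    change j = i at hj
    subst hj
    have := b.isLt
    simp only [Pi.sub_apply, Pi.single_eq_same] at this
    change (b : ℕ) = W j - 1 at hb
    omega
  · obtain ⟨j, b⟩ := q
    intro hq
    refine ⟨⟨j, b, ?_⟩, rfl⟩
    by_cases hj : j = i
    · subst hj
      have := b.isLt
      simp only [Pi.sub_apply, Pi.single_eq_same]
      simp only [true_and] at hq
      omega
    · simp [hj]

end BlockIndices

section BlockMatrices

variable {M N : ℕ}

theorem blockM_submatrix_blockCastLE (A : Matrix (Fin M) (Fin N) (LaurentSeries K))
    {U' U : Fin N → ℕ} {V' V : Fin M → ℕ} (hU : U' ≤ U) (hV : V' ≤ V) :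
    (blockM A U V).submatrix (blockCastLE hV) (blockCastLE hU) = blockM A U' V' :=
  rfl

theorem injective_mulVec_blockM_updateCol_lastInBlock
    (A : Matrix (Fin M) (Fin N) (LaurentSeries K)) {U : Fin N → ℕ} {V : Fin M → ℕ}
    {m : Fin M} {n : Fin N} (hV : 0 < V m) (hU : 0 < U n)
    (h : (blockM A (U - Pi.single n 1) (V - Pi.single m 1)).rank =
      ∑ j, (U - Pi.single n 1 : Fin N → ℕ) j) :
    Injective ((blockM A U V).updateCol (lastInBlock U n hU)
      (Pi.single (lastInBlock V m hV) 1)).mulVec := by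
  refine Matrix.injective_mulVec_updateCol_single _ (blockCastLE tsub_le_self)
    (blockCastLE tsub_le_self) (blockCastLE_injective _)
    (fun x => (mem_range_blockCastLE_iff hV _).1 ⟨x, rfl⟩) (mem_range_blockCastLE_iff hU) ?_
  rw [blockM_submatrix_blockCastLE, ← Matrix.rank_eq_card_iff_injective_mulVec, h]
  simp [Fintype.card_sigma]

def AllBlocksNonsingular (A : Matrix (Fin M) (Fin N) (LaurentSeries K)) : Prop :=
  ∀ (U : Fin N → ℕ) (V : Fin M → ℕ), (∑ n, U n) = (∑ m, V m) →
    (blockM A U V).rank = ∑ n, U n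

def appendCol (A' : Matrix (Fin M) (Fin N) (LaurentSeries K)) (c : Fin M → LaurentSeries K) :
    Matrix (Fin M) (Fin (N + 1)) (LaurentSeries K) :=
  Matrix.of fun m n => Fin.snoc (α := fun _ => LaurentSeries K) (A' m) (c m) n

def momentColumn (s : ℕ → K) (m : Fin M) : LaurentSeries K :=
  HahnSeries.ofPowerSeries ℤ K (PowerSeries.mk fun i => s i ^ ((m : ℕ) + 1))

def stage (U : Fin (N + 1) → ℕ) (V : Fin M → ℕ) : ℕ :=
  Finset.univ.sup V + U (Fin.last N)

theorem le_stage (U : Fin (N + 1) → ℕ) (V : Fin M → ℕ) (m : Fin M) :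
    V m + U (Fin.last N) ≤ stage U V :=
  Nat.add_le_add_right (Finset.le_sup (Finset.mem_univ m)) _

theorem finite_setOf_stage_le (k : ℕ) :
    {UV : (Fin (N + 1) → ℕ) × (Fin M → ℕ) |
      (∑ n, UV.1 n) = (∑ m, UV.2 m) ∧ stage UV.1 UV.2 ≤ k}.Finite := by
  refine ((Set.finite_Iic fun _ => M * k).prod (Set.finite_Iic fun _ => k)).subset ?_
  rintro ⟨U, V⟩ ⟨hUV, hk : stage U V ≤ k⟩
  have hV : ∀ m, V m ≤ k := fun m => by have := le_stage U V m; omega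
  refine ⟨fun n => ?_, hV⟩
  calc U n ≤ ∑ n, U n := Finset.single_le_sum (by simp) (Finset.mem_univ n)
    _ = ∑ m, V m := hUV
    _ ≤ ∑ _m : Fin M, k := Finset.sum_le_sum fun m _ => hV m
    _ = M * k := by simp

variable (A' : Matrix (Fin M) (Fin N) (LaurentSeries K))

def NonsingularUpTo (s : ℕ → K) (k : ℕ) : Prop :=
  ∀ (U : Fin (N + 1) → ℕ) (V : Fin M → ℕ), (∑ n, U n) = (∑ m, V m) → stage U V ≤ k →
    (blockM (appendCol A' (momentColumn s)) U V).rank = ∑ n, U n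

theorem blockM_appendCol_castSucc (c : Fin M → LaurentSeries K) (U : Fin (N + 1) → ℕ)
    (V : Fin M → ℕ) (q : (m : Fin M) × Fin (V m)) (n : Fin N) (b : Fin (U n.castSucc)) :
    blockM (appendCol A' c) U V q ⟨n.castSucc, b⟩ = blockM A' (U ∘ Fin.castSucc) V q ⟨n, b⟩ := by
  simp [blockM, hankel, appendCol]

theorem blockM_appendCol_momentColumn_last (s : ℕ → K) (U : Fin (N + 1) → ℕ) (V : Fin M → ℕ)
    (q : (m : Fin M) × Fin (V m)) (b : Fin (U (Fin.last N))) :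
    blockM (appendCol A' (momentColumn s)) U V q ⟨Fin.last N, b⟩ =
      s (q.2 + b + 1) ^ ((q.1 : ℕ) + 1) := by
  have hidx : ((q.2 : ℕ) : ℤ) + (b : ℤ) + 1 = ((q.2 + b + 1 : ℕ) : ℤ) := by push_cast; ring
  simp only [blockM, hankel, appendCol, Matrix.of_apply, Fin.snoc_last, hidx, momentColumn,
    HahnSeries.ofPowerSeries_apply_coeff, PowerSeries.coeff_mk]

theorem blockM_appendCol_momentColumn_congr {s s' : ℕ → K} {U : Fin (N + 1) → ℕ}
    {V : Fin M → ℕ} (hs : ∀ i < stage U V, s i = s' i) :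
    blockM (appendCol A' (momentColumn s)) U V = blockM (appendCol A' (momentColumn s')) U V := by
  ext q ⟨n, b⟩
  induction n using Fin.lastCases with
  | last =>
    rw [blockM_appendCol_momentColumn_last, blockM_appendCol_momentColumn_last, hs]
    have := le_stage U V q.1
    omega
  | cast n => rw [blockM_appendCol_castSucc, blockM_appendCol_castSucc]

theorem blockM_appendCol_update_eq_updateCol {s : ℕ → K} {k : ℕ} {U : Fin (N + 1) → ℕ}
    {V : Fin M → ℕ} (hst : stage U V = k + 1) (hU : 0 < U (Fin.last N)) (t : K) :
    blockM (appendCol A' (momentColumn (update s k t))) U V =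
      (blockM (appendCol A' (momentColumn s)) U V).updateCol (lastInBlock U (Fin.last N) hU)
        fun q => update s k t (q.2 + U (Fin.last N)) ^ ((q.1 : ℕ) + 1) := by
  ext q ⟨n, b⟩
  rw [Matrix.updateCol_apply]
  split_ifs with hcol
  · obtain ⟨rfl, hb⟩ := eq_lastInBlock_iff.1 hcol
    rw [blockM_appendCol_momentColumn_last]
    congr 2
    simp only at hb
    omega
  · induction n using Fin.lastCases with
    | last =>
      rw [blockM_appendCol_momentColumn_last, blockM_appendCol_momentColumn_last,
        update_of_ne]
      have := le_stage U V q.1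
      have : (b : ℕ) ≠ U (Fin.last N) - 1 := fun hb => hcol (eq_lastInBlock_iff.2 ⟨rfl, hb⟩)
      omega
    | cast n => rw [blockM_appendCol_castSucc, blockM_appendCol_castSucc]

variable {A'}

theorem rank_blockM_appendCol_of_last_eq_zero (h : AllBlocksNonsingular A')
    (c : Fin M → LaurentSeries K) {U : Fin (N + 1) → ℕ} {V : Fin M → ℕ}
    (hUV : (∑ n, U n) = (∑ m, V m)) (hU : U (Fin.last N) = 0) :
    (blockM (appendCol A' c) U V).rank = ∑ n, U n := by
  have hsum : (∑ n, U n) = ∑ n, (U ∘ Fin.castSucc) n := by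
    simp [Fin.sum_univ_castSucc, hU]
  have hbij : Bijective (Sigma.map Fin.castSucc fun _ b => b :
      (n : Fin N) × Fin (U n.castSucc) → (n : Fin (N + 1)) × Fin (U n)) := by
    refine ⟨(Fin.castSucc_injective N).sigma_map fun _ => injective_id, ?_⟩
    rintro ⟨n, b⟩
    induction n using Fin.lastCases with
    | last => exact (Fin.cast hU b).elim0
    | cast n => exact ⟨⟨n, b⟩, rfl⟩
  have hsub : (blockM (appendCol A' c) U V).submatrix (Equiv.refl _) (Equiv.ofBijective _ hbij) =
      blockM A' (U ∘ Fin.castSucc) V := by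
    ext q ⟨n, b⟩
    exact blockM_appendCol_castSucc A' c U V q n b
  rw [← Matrix.rank_submatrix _ (Equiv.refl _) (Equiv.ofBijective _ hbij), hsub, hsum]
  exact h _ _ (hsum ▸ hUV)

theorem NonsingularUpTo.congr {s s' : ℕ → K} {k : ℕ} (hs : ∀ i < k, s i = s' i)
    (h : NonsingularUpTo A' s k) : NonsingularUpTo A' s' k := fun U V hUV hk => by
  rw [← blockM_appendCol_momentColumn_congr A' fun i hi => hs i (by omega)]
  exact h U V hUV hk

theorem nonsingularUpTo_zero (h : AllBlocksNonsingular A') (s : ℕ → K) :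
    NonsingularUpTo A' s 0 := fun U V hUV hk =>
  rank_blockM_appendCol_of_last_eq_zero h _ hUV (by unfold stage at hk; omega)

end BlockMatrices

def momentPoly (s : ℕ → K) (k i m : ℕ) : K[X] :=
  (if i = k then X else C (s i)) ^ (m + 1)

theorem eval_momentPoly (s : ℕ → K) (k i m : ℕ) (t : K) :
    (momentPoly s k i m).eval t = update s k t i ^ (m + 1) := by
  unfold momentPoly
  split_ifs with hi
  · simp [hi]
  · simp [update_of_ne hi]

theorem coeff_momentPoly_succ (s : ℕ → K) (k i m m' : ℕ) :
    (momentPoly s k i m).coeff (m' + 1) = if i = k ∧ m = m' then 1 else 0 := by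
  unfold momentPoly
  split_ifs with hi hik hik
  · simp [coeff_X_pow, hik.2]
  · simpa [coeff_X_pow] using fun h => hik ⟨hi, h.symm⟩
  · exact absurd hik.1 hi
  · rw [← C_pow, coeff_C_succ]

section Step

variable {M N : ℕ} {A' : Matrix (Fin M) (Fin N) (LaurentSeries K)}

theorem NonsingularUpTo.finite_setOf_rank_update_ne (h : AllBlocksNonsingular A') {s : ℕ → K}
    {k : ℕ} (hs : NonsingularUpTo A' s k) {U : Fin (N + 1) → ℕ} {V : Fin M → ℕ}
    (hUV : (∑ n, U n) = (∑ m, V m)) (hst : stage U V = k + 1) :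
    {t : K | (blockM (appendCol A' (momentColumn (update s k t))) U V).rank ≠ ∑ n, U n}.Finite := by
  rcases Nat.eq_zero_or_pos (U (Fin.last N)) with hU | hU
  · simp [rank_blockM_appendCol_of_last_eq_zero h _ hUV hU]
  obtain ⟨m, -, hm⟩ : ∃ m ∈ Finset.univ, V m ≠ 0 := Finset.exists_ne_zero_of_sum_ne_zero <| by
    have := Finset.single_le_sum (fun n _ => Nat.zero_le (U n)) (Finset.mem_univ (Fin.last N))
    omega
  obtain ⟨m₀, -, hm₀⟩ := Finset.univ.exists_max_image V ⟨m, Finset.mem_univ m⟩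
  have hV : 0 < V m₀ := (Nat.pos_of_ne_zero hm).trans_le (hm₀ m (Finset.mem_univ m))
  have hsup : Finset.univ.sup V = V m₀ :=
    le_antisymm (Finset.sup_le fun m _ => hm₀ m (Finset.mem_univ m))
      (Finset.le_sup (Finset.mem_univ m₀))
  have hk : V m₀ + U (Fin.last N) = k + 1 := hsup ▸ hst
  -- the minor of the corner entry is a block matrix of smaller stage
  have hminor := hs (U - Pi.single (Fin.last N) 1) (V - Pi.single m₀ 1)
    (by rw [sum_tsub_single_one _ hU, sum_tsub_single_one _ hV, hUV]) <| by
      have : Finset.univ.sup (V - Pi.single m₀ 1) ≤ V m₀ :=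
        hsup ▸ Finset.sup_mono_fun fun m _ => tsub_le_self
      simp only [stage, Pi.sub_apply, Pi.single_eq_same]
      omega
  have hcof := injective_mulVec_blockM_updateCol_lastInBlock _ hV hU hminor
  simp_rw [blockM_appendCol_update_eq_updateCol A' hst hU, ← eval_momentPoly]
  rw [show ∑ n, U n = Fintype.card ((n : Fin (N + 1)) × Fin (U n)) by simp [Fintype.card_sigma]]
  refine Matrix.finite_setOf_rank_updateCol_eval_ne _
    (Fintype.equivOfCardEq (by simp [Fintype.card_sigma, hUV])) _ _ (d := m₀ + 1) ?_ ?_ hcof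
  · rw [coeff_momentPoly_succ, if_pos ⟨show V m₀ - 1 + U (Fin.last N) = k by omega, rfl⟩]
    exact one_ne_zero
  · intro q hq
    rw [coeff_momentPoly_succ, if_neg]
    rintro ⟨hqk, hqm⟩
    have := le_stage U V q.1
    exact hq (eq_lastInBlock_iff.2 ⟨Fin.ext hqm, by omega⟩)

theorem NonsingularUpTo.exists_update [Infinite K] (h : AllBlocksNonsingular A') {s : ℕ → K}
    {k : ℕ} (hs : NonsingularUpTo A' s k) : ∃ t, NonsingularUpTo A' (update s k t) (k + 1) := by
  have hfin : {UV : (Fin (N + 1) → ℕ) × (Fin M → ℕ) |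
      (∑ n, UV.1 n) = (∑ m, UV.2 m) ∧ stage UV.1 UV.2 = k + 1}.Finite :=
    (finite_setOf_stage_le (k + 1)).subset fun _ hUV => ⟨hUV.1, hUV.2.le⟩
  obtain ⟨t, ht⟩ := (hfin.biUnion fun _ hUV =>
    hs.finite_setOf_rank_update_ne h hUV.1 hUV.2).exists_notMem
  refine ⟨t, fun U V hUV hst => ?_⟩
  rcases hst.lt_or_eq with hlt | heq
  · exact hs.congr (fun i hi => (update_of_ne hi.ne _ _).symm) U V hUV (by omega)
  · by_contra hne
    exact ht (Set.mem_biUnion (x := (U, V)) ⟨hUV, heq⟩ hne)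

end Step

/-- if `K` is infinite and every square matrix
`M_{U₁,…,U_N;V₁,…,V_M}(A')` with `U₁+⋯+U_N = V₁+⋯+V_M` is nonsingular, then one can
append a column `(α_{1,N+1},…,α_{M,N+1})` to `A'` so that the resulting `M × (N+1)`
matrix `A` has the same property. -/
theorem append_column_preserving_nonsingularity
    {K : Type*} [Field K] [Infinite K] {M N : ℕ}
    (A' : Matrix (Fin M) (Fin N) (LaurentSeries K))
    (h : ∀ (U : Fin N → ℕ) (V : Fin M → ℕ), (∑ n, U n) = (∑ m, V m) →
      (blockM A' U V).rank = ∑ n, U n) :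
    ∃ c : Fin M → LaurentSeries K,
      ∀ (U : Fin (N + 1) → ℕ) (V : Fin M → ℕ), (∑ n, U n) = (∑ m, V m) →
        (blockM
          (Matrix.of fun (m : Fin M) (n : Fin (N + 1)) =>
            Fin.snoc (α := fun _ => LaurentSeries K) (A' m) (c m) n : Matrix (Fin M) (Fin (N + 1)) (LaurentSeries K))
          U V).rank = ∑ n, U n := by
  obtain ⟨s, hs⟩ := exists_forall_of_forall_exists_extend (NonsingularUpTo A')
    (fun _ _ _ hfg => NonsingularUpTo.congr hfg) (nonsingularUpTo_zero h 0)
    fun s k hs => by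
      obtain ⟨t, ht⟩ := hs.exists_update h
      exact ⟨update s k t, fun i hi => update_of_ne hi.ne _ _, ht⟩
  exact ⟨momentColumn s, fun U V hUV => hs (stage U V) U V hUV le_rfl⟩
end
end
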